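/- arXiv:math/9307212 — 5 statements merged into one kernel-verified Lean document; each statement's English description precedes it below -/
import Mathlib

section
/- Let σ > −1, not an integer less than k, and let p_k be the monic shifted Legendre polynomial of degree k on [0,1]. Then the modified moment ν_k = ∫_0^1 p_k(t) t^σ ln(1/t) dt satisfies (2k)!/(k!)² · ν_k = (1/(σ+1)) · [1/(σ+1) + Σ_{r=1}^k (1/(σ+1+r) − 1/(σ+1−r))] · Π_{r=1}^k (σ+1−r)/(σ+1+r). -/
open Polynomial MeasureTheory

open Polynomial MeasureTheory Set Real Filter
open scoped Topology

namespace MML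

noncomputable def F (a : ℝ) (t : ℝ) : ℝ := (t ^ (a+1) * (1 - (a+1) * Real.log t)) / (a+1)^2

lemma hF0 (a : ℝ) (ha : -1 < a) : F a 0 = 0 := by
  simp [F, Real.zero_rpow (by linarith : a + 1 ≠ 0)]

lemma hF1 (a : ℝ) : F a 1 = 1 / (a+1)^2 := by simp [F]

lemma hFderiv (a : ℝ) (ha : -1 < a) {t : ℝ} (ht : 0 < t) :
    HasDerivAt (F a) (t ^ a * Real.log (1/t)) t := by
  have ha1 : a + 1 ≠ 0 := by linarith
  have h1 : HasDerivAt (fun t : ℝ => t ^ (a+1)) ((a+1) * t ^ a) t := by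
    simpa using Real.hasDerivAt_rpow_const (p := a+1) (Or.inl ht.ne')
  have h2 : HasDerivAt (fun t : ℝ => 1 - (a+1) * Real.log t) (-((a+1) / t)) t := by
    simpa [div_eq_mul_inv] using ((Real.hasDerivAt_log ht.ne').const_mul (a+1)).const_sub 1
  have h3 := (h1.mul h2).div_const ((a+1)^2)
  refine (h3 : HasDerivAt (F a) _ t).congr_deriv ?_
  have hts : t ^ (a + 1) = t ^ a * t := by
    rw [Real.rpow_add ht, Real.rpow_one]
  rw [Real.log_div one_ne_zero ht.ne', Real.log_one, hts]
  field_simp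
  ring

lemma hFcont (a : ℝ) (ha : -1 < a) : ContinuousOn (F a) (Icc 0 1) := by
  intro x hx
  rcases eq_or_lt_of_le hx.1 with h | h
  · subst h
    have key : Tendsto (F a) (𝓝[>] (0:ℝ)) (𝓝 0) := by
      have h1 : Tendsto (fun t : ℝ => t ^ (a+1)) (𝓝[>] (0:ℝ)) (𝓝 0) := by
        have := (Real.continuousAt_rpow_const 0 (a+1) (Or.inr (by linarith))).tendsto
        rw [Real.zero_rpow (by linarith : a + 1 ≠ 0)] at this
        exact this.mono_left nhdsWithin_le_nhds
      have h2 : Tendsto (fun t : ℝ => Real.log t * t ^ (a+1)) (𝓝[>] (0:ℝ)) (𝓝 0) :=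
        tendsto_log_mul_rpow_nhdsGT_zero (by linarith)
      have : Tendsto (fun t : ℝ => (t ^ (a+1) - (a+1) * (Real.log t * t ^ (a+1))) / (a+1)^2)
          (𝓝[>] (0:ℝ)) (𝓝 ((0 - (a+1) * 0) / (a+1)^2)) :=
        ((h1.sub (h2.const_mul (a+1))).div_const _)
      simp only [zero_sub, mul_zero, neg_zero, zero_div] at this
      refine this.congr (fun t => ?_)
      simp only [F]; ring
    have : ContinuousWithinAt (F a) (Ici 0) 0 := by
      rw [← continuousWithinAt_Ioi_iff_Ici]
      rw [ContinuousWithinAt, hF0 a ha]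
      exact key
    exact this.mono Icc_subset_Ici_self
  · exact ((hFderiv a ha h).continuousAt).continuousWithinAt

lemma integrable_rpow_mul_log (a : ℝ) (ha : -1 < a) :
    IntegrableOn (fun t : ℝ => t ^ a * Real.log (1/t)) (Ioc 0 1) := by
  refine intervalIntegral.integrableOn_deriv_of_nonneg (hFcont a ha)
    (fun x hx => hFderiv a ha hx.1) (fun x hx => ?_)
  have h1 : (0:ℝ) ≤ x ^ a := Real.rpow_nonneg hx.1.le _
  have h2 : (0:ℝ) ≤ Real.log (1/x) := by
    rw [Real.log_div one_ne_zero hx.1.ne', Real.log_one]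
    simp only [zero_sub, Left.nonneg_neg_iff]
    exact Real.log_nonpos hx.1.le hx.2.le
  positivity

lemma integral_rpow_mul_log (a : ℝ) (ha : -1 < a) :
    ∫ t in Ioc (0:ℝ) 1, t ^ a * Real.log (1/t) = 1 / (a+1)^2 := by
  rw [← intervalIntegral.integral_of_le zero_le_one]
  rw [intervalIntegral.integral_eq_sub_of_hasDerivAt_of_le zero_le_one (hFcont a ha)
    (fun x hx => hFderiv a ha hx.1)
    ((intervalIntegrable_iff_integrableOn_Ioc_of_le zero_le_one).2 (integrable_rpow_mul_log a ha))]
  rw [hF1, hF0 a ha, sub_zero]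

end MML



namespace MML

/-- coefficients of the (non-monic) shifted Legendre polynomial -/
noncomputable def c (k i : ℕ) : ℝ := (-1)^(k-i) * (k.choose i) * ((k+i).choose k)

lemma nat_prod_Icc (m k : ℕ) : (∏ r ∈ Finset.Icc 1 k, (m + r)) * m.factorial = (m + k).factorial := by
  induction k with
  | zero => simp
  | succ k ih =>
    rw [Finset.prod_Icc_succ_top (by omega : 1 ≤ k + 1)]
    rw [mul_right_comm, ih]
    rw [show m + (k+1) = (m + k) + 1 by ring, Nat.factorial_succ]
    ring

lemma nat_prod_Icc' (m k : ℕ) (hmk : m ≤ k) :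
    (∏ j ∈ Finset.Icc (m+1) k, (j - m)) = (k - m).factorial := by
  induction k with
  | zero => interval_cases m; simp
  | succ k ih =>
    rcases Nat.lt_or_ge k m with h | h
    · have : m = k + 1 := by omega
      subst this; simp
    · rw [Finset.prod_Icc_succ_top (by omega : m + 1 ≤ k + 1), ih h]
      rw [show k + 1 - m = (k - m) + 1 by omega, Nat.factorial_succ]
      ring

lemma prod_range_cast (m : ℕ) : (∏ j ∈ Finset.range m, ((j:ℝ) - m)) = (-1)^m * m.factorial := by
  have h1 : ∀ j ∈ Finset.range m, ((j:ℝ) - m) = (-1) * (((m - j : ℕ) : ℝ)) := by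
    intro j hj
    rw [Nat.cast_sub (le_of_lt (Finset.mem_range.1 hj))]
    ring
  rw [Finset.prod_congr rfl h1]
  rw [Finset.prod_mul_distrib, Finset.prod_const, Finset.card_range]
  congr 1
  rw [← Nat.cast_prod]
  congr 1
  calc ∏ j ∈ Finset.range m, (m - j) = ∏ j ∈ Finset.range m, (m - (m - 1 - j)) := by
        rw [Finset.prod_range_reflect]
    _ = ∏ j ∈ Finset.range m, (j + 1) := by
        refine Finset.prod_congr rfl (fun j hj => ?_)
        have := Finset.mem_range.1 hj
        omega
    _ = m.factorial := Finset.prod_range_add_one_eq_factorial m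

end MML

namespace MML2
open MML

lemma nat_key (k m : ℕ) (hm : m ≤ k) :
    k.choose m * ((k+m).choose k) * m.factorial * (k-m).factorial * m.factorial
      = (m + k).factorial := by
  have h1 : k.choose m * m.factorial * (k-m).factorial = k.factorial :=
    Nat.choose_mul_factorial_mul_factorial hm
  have h2 : (k+m).choose k * k.factorial * m.factorial = (k+m).factorial := by
    have := Nat.choose_mul_factorial_mul_factorial (Nat.le_add_right k m)
    rwa [Nat.add_sub_cancel_left] at this
  calc k.choose m * ((k+m).choose k) * m.factorial * (k-m).factorial * m.factorial
      = (k+m).choose k * (k.choose m * m.factorial * (k-m).factorial) * m.factorial := by ring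
    _ = (k+m).choose k * k.factorial * m.factorial := by rw [h1]
    _ = (k+m).factorial := h2
    _ = (m+k).factorial := by rw [Nat.add_comm]

lemma erase_split (k m : ℕ) (hm : m ≤ k) :
    (Finset.range (k+1)).erase m = Finset.range m ∪ Finset.Icc (m+1) k := by
  ext j
  simp only [Finset.mem_erase, Finset.mem_range, Finset.mem_union, Finset.mem_Icc]
  omega

lemma eval_key (k m : ℕ) (hm : m ≤ k) :
    (∏ r ∈ Finset.Icc 1 k, ((-((m:ℝ)+1)) - ((r:ℝ) - 1))) =
      c k m * ∏ j ∈ (Finset.range (k+1)).erase m, ((j:ℝ) - m) := by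
  have hdisj : Disjoint (Finset.range m) (Finset.Icc (m+1) k) := by
    rw [Finset.disjoint_left]
    intro j hj hj'
    simp only [Finset.mem_range] at hj
    simp only [Finset.mem_Icc] at hj'
    omega
  have hA : (∏ r ∈ Finset.Icc 1 k, ((m:ℝ) + r)) * m.factorial = (m+k).factorial := by
    have := nat_prod_Icc m k
    have := congrArg (fun n : ℕ => (n : ℝ)) this
    push_cast at this
    convert this using 2
  have hL : (∏ r ∈ Finset.Icc 1 k, ((-((m:ℝ)+1)) - ((r:ℝ) - 1)))
      = (-1)^k * ∏ r ∈ Finset.Icc 1 k, ((m:ℝ) + r) := by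
    have : ∀ r ∈ Finset.Icc 1 k, ((-((m:ℝ)+1)) - ((r:ℝ) - 1)) = (-1) * ((m:ℝ) + r) := by
      intro r _; ring
    rw [Finset.prod_congr rfl this, Finset.prod_mul_distrib, Finset.prod_const, Nat.card_Icc]
    simp
  have hsplit : (∏ j ∈ (Finset.range (k+1)).erase m, ((j:ℝ) - m))
      = ((-1)^m * m.factorial) * (k-m).factorial := by
    rw [erase_split k m hm, Finset.prod_union hdisj, prod_range_cast]
    congr 1
    have : ∀ j ∈ Finset.Icc (m+1) k, ((j:ℝ) - m) = (((j - m : ℕ)) : ℝ) := by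
      intro j hj
      simp only [Finset.mem_Icc] at hj
      push_cast [Nat.cast_sub (by omega : m ≤ j)]
      ring
    rw [Finset.prod_congr rfl this, ← Nat.cast_prod, nat_prod_Icc' m k hm]
  rw [hL, hsplit, c]
  have hsgn : ((-1:ℝ))^(k-m) * (-1)^m = (-1)^k := by
    rw [← pow_add, Nat.sub_add_cancel hm]
  have hfac : ((m+k).factorial : ℝ)
      = (k.choose m : ℝ) * ((k+m).choose k) * m.factorial * (k-m).factorial * m.factorial := by
    rw [← nat_key k m hm]
    push_cast
    ring
  have hmfac : (m.factorial : ℝ) ≠ 0 := Nat.cast_ne_zero.2 (Nat.factorial_ne_zero m)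
  have hAval : (∏ r ∈ Finset.Icc 1 k, ((m:ℝ) + r))
      = (k.choose m : ℝ) * ((k+m).choose k) * m.factorial * (k-m).factorial := by
    have h2 := hA
    rw [hfac] at h2
    exact mul_right_cancel₀ hmfac h2
  rw [hAval, ← hsgn]
  ring

end MML2

namespace MML3
open MML MML2

lemma poly_id (k : ℕ) :
    (∏ r ∈ Finset.Icc 1 k, (X - Polynomial.C ((r:ℝ) - 1))) =
      ∑ i ∈ Finset.range (k+1), Polynomial.C (c k i) *
        ∏ j ∈ (Finset.range (k+1)).erase i, (X + Polynomial.C ((j:ℝ)+1)) := by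
  apply Polynomial.eq_of_degrees_lt_of_eval_index_eq (v := fun m : ℕ => -((m:ℝ)+1))
      (Finset.range (k+1))
  · intro a _ b _ hab
    have : ((a:ℝ)) = b := by
      simp only [neg_add_cancel, neg_inj, add_left_inj] at hab
      exact hab
    exact_mod_cast this
  · rw [Finset.card_range]
    calc (∏ r ∈ Finset.Icc 1 k, (X - Polynomial.C ((r:ℝ) - 1))).degree
        = ∑ r ∈ Finset.Icc 1 k, (X - Polynomial.C ((r:ℝ) - 1)).degree := degree_prod _ _
      _ = ∑ _r ∈ Finset.Icc 1 k, (1 : WithBot ℕ) := by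
          refine Finset.sum_congr rfl fun r _ => degree_X_sub_C _
      _ = (k : WithBot ℕ) := by
          rw [Finset.sum_const, Nat.card_Icc]; simp
      _ < ((k+1 : ℕ) : WithBot ℕ) := by exact_mod_cast WithBot.coe_lt_coe.2 (Nat.lt_succ_self k)
  · rw [Finset.card_range]
    refine lt_of_le_of_lt (degree_sum_le _ _) ?_
    rw [Finset.sup_lt_iff (by exact_mod_cast WithBot.bot_lt_coe (k+1))]
    intro i hi
    refine lt_of_le_of_lt (degree_mul_le _ _) ?_
    have h1 : (Polynomial.C (c k i)).degree ≤ 0 := degree_C_le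
    have h2 : (∏ j ∈ (Finset.range (k+1)).erase i, (X + Polynomial.C ((j:ℝ)+1))).degree
        = (k : WithBot ℕ) := by
      rw [degree_prod]
      calc ∑ j ∈ (Finset.range (k+1)).erase i, (X + Polynomial.C ((j:ℝ)+1)).degree
          = ∑ _j ∈ (Finset.range (k+1)).erase i, (1 : WithBot ℕ) := by
            refine Finset.sum_congr rfl fun j _ => ?_
            rw [show (X + Polynomial.C ((j:ℝ)+1)) = X - Polynomial.C (-((j:ℝ)+1)) by
              rw [map_neg, sub_neg_eq_add]]
            exact degree_X_sub_C _
        _ = (k : WithBot ℕ) := by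
            rw [Finset.sum_const, Finset.card_erase_of_mem (Finset.mem_range.2 (Finset.mem_range.1 hi)), Finset.card_range]
            simp
    calc (Polynomial.C (c k i)).degree +
          (∏ j ∈ (Finset.range (k+1)).erase i, (X + Polynomial.C ((j:ℝ)+1))).degree
        ≤ 0 + (k : WithBot ℕ) := by rw [h2]; exact add_le_add_left h1 _
      _ = (k : WithBot ℕ) := by rw [zero_add]
      _ < ((k+1 : ℕ) : WithBot ℕ) := by exact_mod_cast WithBot.coe_lt_coe.2 (Nat.lt_succ_self k)
  · intro m hm
    have hmk : m ≤ k := by simpa [Nat.lt_succ_iff] using Finset.mem_range.1 hm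
    rw [eval_prod, eval_finset_sum]
    have hzero : ∀ i ∈ Finset.range (k+1), i ≠ m →
        (Polynomial.C (c k i) * ∏ j ∈ (Finset.range (k+1)).erase i,
          (X + Polynomial.C ((j:ℝ)+1))).eval (-((m:ℝ)+1)) = 0 := by
      intro i _ him
      rw [eval_mul, eval_prod]
      have : m ∈ (Finset.range (k+1)).erase i := Finset.mem_erase.2 ⟨(Ne.symm him), hm⟩
      rw [Finset.prod_eq_zero this (by simp only [eval_add, eval_X, eval_C]; ring)]
      simp
    rw [Finset.sum_eq_single_of_mem m hm hzero]
    rw [eval_mul, eval_prod, eval_C]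
    simp only [eval_sub, eval_add, eval_X, eval_C]
    rw [eval_key k m hmk]
    congr 1
    refine Finset.prod_congr rfl fun j _ => by ring

lemma Msum (k : ℕ) (x : ℝ) (hx : ∀ j : ℕ, j ≤ k → x + 1 + j ≠ 0) :
    ∑ i ∈ Finset.range (k+1), c k i / (x + 1 + i)
      = (∏ r ∈ Finset.Icc 1 k, (x + 1 - r)) / (∏ j ∈ Finset.range (k+1), (x + 1 + j)) := by
  have hD : (∏ j ∈ Finset.range (k+1), (x + 1 + (j:ℝ))) ≠ 0 :=
    Finset.prod_ne_zero_iff.2 fun j hj => hx j (by simpa [Nat.lt_succ_iff] using hj)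
  have hid := congrArg (Polynomial.eval x) (poly_id k)
  rw [eval_prod, eval_finset_sum] at hid
  simp only [eval_mul, eval_prod, eval_sub, eval_add, eval_X, eval_C] at hid
  rw [eq_div_iff hD, Finset.sum_mul]
  have : ∀ i ∈ Finset.range (k+1),
      c k i / (x + 1 + i) * (∏ j ∈ Finset.range (k+1), (x + 1 + (j:ℝ)))
        = c k i * ∏ j ∈ (Finset.range (k+1)).erase i, (x + 1 + (j:ℝ)) := by
    intro i hi
    rw [← Finset.mul_prod_erase _ _ hi]
    have hxi : x + 1 + (i:ℝ) ≠ 0 := hx i (by simpa [Nat.lt_succ_iff] using hi)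
    field_simp
  rw [Finset.sum_congr rfl this]
  calc ∑ i ∈ Finset.range (k+1), c k i * ∏ j ∈ (Finset.range (k+1)).erase i, (x + 1 + (j:ℝ))
      = ∑ i ∈ Finset.range (k+1), c k i * ∏ j ∈ (Finset.range (k+1)).erase i, (x + ((j:ℝ)+1)) := by
        refine Finset.sum_congr rfl fun i _ => ?_
        congr 1
        exact Finset.prod_congr rfl fun j _ => by ring
    _ = ∏ r ∈ Finset.Icc 1 k, (x - ((r:ℝ)-1)) := hid.symm
    _ = ∏ r ∈ Finset.Icc 1 k, (x + 1 - (r:ℝ)) := Finset.prod_congr rfl fun r _ => by ring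

end MML3



namespace MML4

lemma integrable_poly (f : Polynomial ℝ) : IntegrableOn (fun t => f.eval t) (Ioc (0:ℝ) 1) :=
  (f.continuous_aeval).integrableOn_Ioc

lemma integral_monomial (a : ℝ) (n : ℕ) :
    ∫ t in Ioc (0:ℝ) 1, a * t ^ n = a / (n + 1) := by
  rw [← intervalIntegral.integral_of_le zero_le_one, intervalIntegral.integral_const_mul,
    integral_pow]
  simp
  ring

lemma integral_poly_mul (f g : Polynomial ℝ) :
    ∫ t in Ioc (0:ℝ) 1, f.eval t * g.eval t
      = ∑ n ∈ Finset.range (f.natDegree+1), ∑ m ∈ Finset.range (g.natDegree+1),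
          f.coeff n * g.coeff m / (n + m + 1) := by
  have heq : ∀ t : ℝ, f.eval t * g.eval t
      = ∑ n ∈ Finset.range (f.natDegree+1), ∑ m ∈ Finset.range (g.natDegree+1),
          (f.coeff n * g.coeff m) * t ^ (n + m) := by
    intro t
    rw [Polynomial.eval_eq_sum_range, Polynomial.eval_eq_sum_range, Finset.sum_mul_sum]
    refine Finset.sum_congr rfl fun n _ => Finset.sum_congr rfl fun m _ => ?_
    rw [pow_add]; ring
  simp_rw [heq]
  rw [MeasureTheory.integral_finset_sum]
  · refine Finset.sum_congr rfl fun n _ => ?_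
    rw [MeasureTheory.integral_finset_sum]
    · refine Finset.sum_congr rfl fun m _ => ?_
      rw [integral_monomial]
      push_cast
      ring_nf
    · intro m _
      exact ((continuous_const.mul (continuous_pow _))).integrableOn_Ioc
  · intro n _
    refine (Continuous.integrableOn_Ioc ?_)
    continuity

end MML4

namespace MML5
open MML MML2 MML3 MML4

noncomputable def Q (k : ℕ) : Polynomial ℝ :=
  ∑ i ∈ Finset.range (k+1), Polynomial.C (c k i / ((2*k).choose k : ℝ)) * X ^ i

lemma hC2k (k : ℕ) : (((2*k).choose k : ℝ)) ≠ 0 :=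
  Nat.cast_ne_zero.2 (Nat.choose_pos (by omega)).ne'

lemma Qcoeff (k n : ℕ) :
    (Q k).coeff n = if n ≤ k then c k n / ((2*k).choose k : ℝ) else 0 := by
  rw [Q, Polynomial.finset_sum_coeff]
  simp_rw [Polynomial.coeff_C_mul, Polynomial.coeff_X_pow, mul_ite, mul_one, mul_zero]
  rw [Finset.sum_ite_eq (Finset.range (k+1)) n]
  simp [Nat.lt_succ_iff]

lemma ck_k (k : ℕ) : c k k = ((2*k).choose k : ℝ) := by
  rw [c, Nat.sub_self, pow_zero, Nat.choose_self, two_mul]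
  simp

lemma Qcoeff_k (k : ℕ) : (Q k).coeff k = 1 := by
  rw [Qcoeff, if_pos le_rfl, ck_k, div_self (hC2k k)]

lemma Qdeg_le (k : ℕ) : (Q k).natDegree ≤ k :=
  Polynomial.natDegree_le_iff_coeff_eq_zero.2 fun m hm => by
    rw [Qcoeff, if_neg (by omega)]

lemma Qmonic (k : ℕ) : (Q k).Monic :=
  Polynomial.monic_of_natDegree_le_of_coeff_eq_one k (Qdeg_le k) (Qcoeff_k k)

lemma Qdeg (k : ℕ) : (Q k).natDegree = k :=
  le_antisymm (Qdeg_le k) (Polynomial.le_natDegree_of_ne_zero (by rw [Qcoeff_k]; norm_num))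

lemma Qorth (k : ℕ) (q : Polynomial ℝ) (hq : q.degree < (k : WithBot ℕ)) :
    ∫ t in Set.Ioc (0:ℝ) 1, (Q k).eval t * q.eval t = 0 := by
  rcases eq_or_ne q 0 with rfl | hq0
  · simp
  have hqd : q.natDegree < k := (Polynomial.natDegree_lt_iff_degree_lt hq0).2 hq
  rw [integral_poly_mul, Qdeg, Finset.sum_comm]
  refine Finset.sum_eq_zero fun m hm => ?_
  have hmk : m < k := lt_of_lt_of_le (Finset.mem_range.1 hm) hqd
  have hz : ∑ n ∈ Finset.range (k+1), c k n / ((m:ℝ) + 1 + n) = 0 := by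
    rw [Msum k (m:ℝ) (fun j _ => by positivity)]
    rw [Finset.prod_eq_zero (Finset.mem_Icc.2 ⟨by omega, by omega⟩ : (m+1) ∈ Finset.Icc 1 k)
      (by push_cast; ring)]
    simp
  have hterm : ∀ n ∈ Finset.range (k+1),
      (Q k).coeff n * q.coeff m / ((n:ℝ) + m + 1)
        = (q.coeff m / ((2*k).choose k : ℝ)) * (c k n / ((m:ℝ) + 1 + n)) := by
    intro n hn
    rw [Qcoeff, if_pos (by simpa [Nat.lt_succ_iff] using Finset.mem_range.1 hn)]
    have hnm : ((n:ℝ) + m + 1) ≠ 0 := by positivity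
    have hmn : ((m:ℝ) + 1 + n) ≠ 0 := by positivity
    field_simp
    ring
  rw [Finset.sum_congr rfl hterm, ← Finset.mul_sum, hz, mul_zero]

lemma punique (k : ℕ) (p : Polynomial ℝ) (hm : p.Monic) (hd : p.natDegree = k)
    (horth : ∀ q : Polynomial ℝ, q.degree < (k : WithBot ℕ) →
      ∫ t in Set.Ioc (0:ℝ) 1, p.eval t * q.eval t = 0) : p = Q k := by
  by_contra hne
  have hd0 : p - Q k ≠ 0 := sub_ne_zero.2 hne
  have hdegQ : (Q k).degree = (k : WithBot ℕ) := by
    rw [Polynomial.degree_eq_natDegree (Qmonic k).ne_zero, Qdeg]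
  have hdegp : p.degree = (k : WithBot ℕ) := by
    rw [Polynomial.degree_eq_natDegree hm.ne_zero, hd]
  have hdeg : (p - Q k).degree < (k : WithBot ℕ) := by
    rw [← hdegp]
    exact Polynomial.degree_sub_lt (by rw [hdegp, hdegQ]) hm.ne_zero
      (by rw [hm.leadingCoeff, (Qmonic k).leadingCoeff])
  have h1 := horth (p - Q k) hdeg
  have h2 := Qorth k (p - Q k) hdeg
  have key : ∫ t in Set.Ioc (0:ℝ) 1, ((p - Q k).eval t)^2 = 0 := by
    have hfe : (fun t => ((p - Q k).eval t)^2)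
        = fun t => p.eval t * (p - Q k).eval t - (Q k).eval t * (p - Q k).eval t := by
      funext t
      simp only [Polynomial.eval_sub]
      ring
    rw [hfe, MeasureTheory.integral_sub (f := fun t => p.eval t * (p - Q k).eval t)
      (g := fun t => (Q k).eval t * (p - Q k).eval t)
      (((Polynomial.continuous p).mul (Polynomial.continuous (p - Q k))).integrableOn_Ioc)
      (((Polynomial.continuous (Q k)).mul (Polynomial.continuous (p - Q k))).integrableOn_Ioc),
      h1, h2, sub_zero]
  have hint : Integrable (fun t => ((p - Q k).eval t)^2)
      (volume.restrict (Set.Ioc (0:ℝ) 1)) :=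
    ((Polynomial.continuous (p - Q k)).pow 2).integrableOn_Ioc
  have hae := (MeasureTheory.integral_eq_zero_iff_of_nonneg
    (fun t => sq_nonneg _) hint).1 key
  have hμ : volume.restrict (Set.Ioc (0:ℝ) 1) {t : ℝ | (p - Q k).eval t ≠ 0} = 0 := by
    refine measure_mono_null (fun t ht => ?_) hae
    simp only [Set.mem_setOf_eq] at ht ⊢
    intro hcon
    exact ht (pow_eq_zero_iff (two_ne_zero)  |>.1 hcon)
  rw [Measure.restrict_apply' measurableSet_Ioc] at hμ
  have hsub2 : Set.Ioc (0:ℝ) 1 ⊆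
      ({t : ℝ | (p - Q k).eval t ≠ 0} ∩ Set.Ioc 0 1) ∪ {t : ℝ | (p - Q k).IsRoot t} := by
    intro t ht
    by_cases h : (p - Q k).eval t = 0
    · exact Or.inr h
    · exact Or.inl ⟨h, ht⟩
  have hvol : volume (Set.Ioc (0:ℝ) 1) = 0 := by
    refine le_antisymm (le_trans (measure_mono hsub2) (le_trans (measure_union_le _ _) ?_))
      (zero_le)
    rw [hμ, ((Polynomial.finite_setOf_isRoot hd0).measure_zero volume)]
    simp
  rw [Real.volume_Ioc] at hvol
  simp at hvol

end MML5

namespace MML6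
open MML MML2 MML3 MML4 MML5 Filter
open scoped Topology

lemma momint (k : ℕ) (σ : ℝ) (hσ : -1 < σ) :
    ∫ t in Set.Ioc (0:ℝ) 1, (Q k).eval t * t ^ σ * Real.log (1/t)
      = ∑ n ∈ Finset.range (k+1), (Q k).coeff n * (1/(σ+(n:ℝ)+1)^2) := by
  have heq : Set.EqOn (fun t : ℝ => (Q k).eval t * t ^ σ * Real.log (1/t))
      (fun t : ℝ => ∑ n ∈ Finset.range (k+1),
        (Q k).coeff n * (t ^ (σ + (n:ℝ)) * Real.log (1/t))) (Set.Ioc 0 1) := by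
    intro t ht
    simp only
    rw [Polynomial.eval_eq_sum_range, Qdeg, Finset.sum_mul, Finset.sum_mul]
    refine Finset.sum_congr rfl fun n _ => ?_
    rw [Real.rpow_add ht.1, Real.rpow_natCast]
    ring
  rw [MeasureTheory.setIntegral_congr_fun measurableSet_Ioc heq]
  rw [MeasureTheory.integral_finset_sum _ (fun n _ => by
    have h : -1 < σ + (n:ℝ) := by
      have : (0:ℝ) ≤ n := Nat.cast_nonneg n
      linarith
    exact (integrable_rpow_mul_log (σ+n) h).const_mul _)]
  refine Finset.sum_congr rfl fun n _ => ?_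
  rw [MeasureTheory.integral_const_mul]
  have h : -1 < σ + (n:ℝ) := by
    have : (0:ℝ) ≤ n := Nat.cast_nonneg n
    linarith
  rw [integral_rpow_mul_log (σ+n) h]

lemma deriv_step (k : ℕ) (σ : ℝ) (hσ : -1 < σ) :
    ∑ n ∈ Finset.range (k+1), c k n / (σ+1+(n:ℝ))^2
      = ((∏ r ∈ Finset.Icc 1 k, (σ+1-(r:ℝ))) *
          (∑ j ∈ Finset.range (k+1), ∏ l ∈ (Finset.range (k+1)).erase j, (σ+1+(l:ℝ)))
        - (∑ r ∈ Finset.Icc 1 k, ∏ s ∈ (Finset.Icc 1 k).erase r, (σ+1-(s:ℝ))) *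
          (∏ j ∈ Finset.range (k+1), (σ+1+(j:ℝ))))
        / (∏ j ∈ Finset.range (k+1), (σ+1+(j:ℝ)))^2 := by
  have hdd : ∀ j : ℕ, (0:ℝ) < σ+1+j := fun j => by
    have : (0:ℝ) ≤ j := Nat.cast_nonneg j
    linarith
  have hD : (∏ j ∈ Finset.range (k+1), (σ+1+(j:ℝ))) ≠ 0 :=
    Finset.prod_ne_zero_iff.2 fun j _ => (hdd j).ne'
  have hL : HasDerivAt (fun x : ℝ => ∑ n ∈ Finset.range (k+1), c k n / (x+1+n))
      (∑ n ∈ Finset.range (k+1), -(c k n / (σ+1+(n:ℝ))^2)) σ := by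
    apply HasDerivAt.fun_sum
    intro n _
    have h0 : HasDerivAt (fun x : ℝ => x+1+(n:ℝ)) 1 σ := by
      have := (hasDerivAt_id σ).add_const ((1:ℝ)+(n:ℝ))
      exact this.congr_of_eventuallyEq (Filter.Eventually.of_forall fun x => by
        simp only [id_eq]
        ring)
    have h1 : HasDerivAt (fun x : ℝ => (x+1+(n:ℝ))⁻¹) _ σ := h0.inv (hdd n).ne'
    have h2 : HasDerivAt (fun x : ℝ => c k n * (x+1+(n:ℝ))⁻¹) _ σ := h1.const_mul (c k n)
    have h3 : (fun x : ℝ => c k n * (x+1+(n:ℝ))⁻¹) = fun x => c k n / (x+1+n) := by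
      funext x
      rw [div_eq_mul_inv]
    rw [h3] at h2
    refine h2.congr_deriv ?_
    ring
  have hN : HasDerivAt (fun x : ℝ => ∏ r ∈ Finset.Icc 1 k, (x+1-(r:ℝ)))
      (∑ r ∈ Finset.Icc 1 k, ∏ s ∈ (Finset.Icc 1 k).erase r, (σ+1-(s:ℝ))) σ := by
    have h := HasDerivAt.fun_finsetProd (u := Finset.Icc 1 k)
      (f := fun r x => x+1-(r:ℝ)) (f' := fun _ => 1) (x := σ) (fun r _ => by
        have := (hasDerivAt_id σ).add_const ((1:ℝ)-(r:ℝ))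
        exact this.congr_of_eventuallyEq (Filter.Eventually.of_forall fun x => by
          simp only [id_eq]
          ring))
    simpa using h
  have hDd : HasDerivAt (fun x : ℝ => ∏ j ∈ Finset.range (k+1), (x+1+(j:ℝ)))
      (∑ j ∈ Finset.range (k+1), ∏ l ∈ (Finset.range (k+1)).erase j, (σ+1+(l:ℝ))) σ := by
    have h := HasDerivAt.fun_finsetProd (u := Finset.range (k+1))
      (f := fun j x => x+1+(j:ℝ)) (f' := fun _ => 1) (x := σ) (fun j _ => by
        have := (hasDerivAt_id σ).add_const ((1:ℝ)+(j:ℝ))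
        exact this.congr_of_eventuallyEq (Filter.Eventually.of_forall fun x => by
          simp only [id_eq]
          ring))
    simpa using h
  have hR := hN.div hDd hD
  have hev : (fun x : ℝ => ∑ n ∈ Finset.range (k+1), c k n / (x+1+n)) =ᶠ[𝓝 σ]
      (fun x : ℝ => (∏ r ∈ Finset.Icc 1 k, (x+1-(r:ℝ))) /
        (∏ j ∈ Finset.range (k+1), (x+1+(j:ℝ)))) := by
    filter_upwards [eventually_gt_nhds hσ] with x hx
    exact Msum k x (fun j _ => by
      have : (0:ℝ) ≤ j := Nat.cast_nonneg j
      linarith)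
  have hL' := hR.congr_of_eventuallyEq hev
  have huniq := hL.unique hL'
  have hs : ∑ n ∈ Finset.range (k+1), c k n / (σ+1+(n:ℝ))^2
      = -∑ n ∈ Finset.range (k+1), -(c k n / (σ+1+(n:ℝ))^2) := by
    rw [← Finset.sum_neg_distrib]
    simp
  rw [hs, huniq]
  rw [neg_div', neg_sub]

lemma final_alg (k : ℕ) (σ : ℝ) (hσ : -1 < σ)
    (hn : ∀ r ∈ Finset.Icc 1 k, σ+1-(r:ℝ) ≠ 0) :
    ((∏ r ∈ Finset.Icc 1 k, (σ+1-(r:ℝ))) *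
        (∑ j ∈ Finset.range (k+1), ∏ l ∈ (Finset.range (k+1)).erase j, (σ+1+(l:ℝ)))
      - (∑ r ∈ Finset.Icc 1 k, ∏ s ∈ (Finset.Icc 1 k).erase r, (σ+1-(s:ℝ))) *
        (∏ j ∈ Finset.range (k+1), (σ+1+(j:ℝ))))
      / (∏ j ∈ Finset.range (k+1), (σ+1+(j:ℝ)))^2
    = (1 / (σ + 1)) *
      (1 / (σ + 1) +
        ∑ r ∈ Finset.Icc 1 k, (1 / (σ + 1 + (r : ℝ)) - 1 / (σ + 1 - (r : ℝ)))) *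
      ∏ r ∈ Finset.Icc 1 k, (σ + 1 - (r : ℝ)) / (σ + 1 + (r : ℝ)) := by
  have hdd : ∀ j : ℕ, (0:ℝ) < σ+1+j := fun j => by
    have : (0:ℝ) ≤ j := Nat.cast_nonneg j
    linarith
  have hσ1 : σ + 1 ≠ 0 := by linarith
  have hins : Finset.range (k+1) = insert 0 (Finset.Icc 1 k) := by
    ext j
    simp only [Finset.mem_range, Finset.mem_insert, Finset.mem_Icc]
    omega
  have h0notin : (0:ℕ) ∉ Finset.Icc 1 k := by simp
  have hDk : (∏ r ∈ Finset.Icc 1 k, (σ+1+(r:ℝ))) ≠ 0 :=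
    Finset.prod_ne_zero_iff.2 fun j _ => (hdd j).ne'
  have hNz : (∏ r ∈ Finset.Icc 1 k, (σ+1-(r:ℝ))) ≠ 0 :=
    Finset.prod_ne_zero_iff.2 hn
  -- express D' and N' via sums of reciprocals
  have hDsum : (∑ j ∈ Finset.range (k+1), ∏ l ∈ (Finset.range (k+1)).erase j, (σ+1+(l:ℝ)))
      = (∑ j ∈ Finset.range (k+1), (σ+1+(j:ℝ))⁻¹) *
        (∏ j ∈ Finset.range (k+1), (σ+1+(j:ℝ))) := by
    rw [Finset.sum_mul]
    refine Finset.sum_congr rfl fun j hj => ?_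
    rw [← Finset.mul_prod_erase _ _ hj, inv_mul_cancel_left₀ (hdd j).ne']
  have hNsum : (∑ r ∈ Finset.Icc 1 k, ∏ s ∈ (Finset.Icc 1 k).erase r, (σ+1-(s:ℝ)))
      = (∑ r ∈ Finset.Icc 1 k, (σ+1-(r:ℝ))⁻¹) *
        (∏ r ∈ Finset.Icc 1 k, (σ+1-(r:ℝ))) := by
    rw [Finset.sum_mul]
    refine Finset.sum_congr rfl fun r hr => ?_
    rw [← Finset.mul_prod_erase _ _ hr, inv_mul_cancel_left₀ (hn r hr)]
  rw [hDsum, hNsum]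
  have hDval : (∏ j ∈ Finset.range (k+1), (σ+1+(j:ℝ)))
      = (σ+1) * ∏ r ∈ Finset.Icc 1 k, (σ+1+(r:ℝ)) := by
    rw [hins, Finset.prod_insert h0notin]
    norm_num
  have hDsum2 : (∑ j ∈ Finset.range (k+1), (σ+1+(j:ℝ))⁻¹)
      = (σ+1)⁻¹ + ∑ r ∈ Finset.Icc 1 k, (σ+1+(r:ℝ))⁻¹ := by
    rw [hins, Finset.sum_insert h0notin]
    norm_num
  rw [hDval, hDsum2, Finset.prod_div_distrib, Finset.sum_sub_distrib]
  simp only [one_div]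
  set A := ∑ r ∈ Finset.Icc 1 k, (σ+1+(r:ℝ))⁻¹ with hA
  set B := ∑ r ∈ Finset.Icc 1 k, (σ+1-(r:ℝ))⁻¹ with hB
  set N := ∏ r ∈ Finset.Icc 1 k, (σ+1-(r:ℝ)) with hN
  set Dk := ∏ r ∈ Finset.Icc 1 k, (σ+1+(r:ℝ)) with hDkd
  field_simp
  ring

end MML6


/-- Modified moments of t^σ ln(1/t) on (0,1] relative to monic shifted Legendre
polynomials, in the case where σ is not an integer in {0,…,k-1}. -/
theorem modified_moments_log_weight_noninteger (k : ℕ) (σ : ℝ) (hσ : -1 < σ)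
    (hσint : ∀ m : ℕ, m < k → σ ≠ (m : ℝ))
    (p : Polynomial ℝ) (hm : p.Monic) (hd : p.natDegree = k)
    (horth : ∀ q : Polynomial ℝ, q.degree < (k : WithBot ℕ) →
      ∫ t in Set.Ioc (0 : ℝ) 1, p.eval t * q.eval t = 0) :
    (Nat.factorial (2 * k) : ℝ) / ((Nat.factorial k : ℝ)) ^ 2 *
      ∫ t in Set.Ioc (0 : ℝ) 1, p.eval t * t ^ σ * Real.log (1 / t) =
    (1 / (σ + 1)) *
      (1 / (σ + 1) +
        ∑ r ∈ Finset.Icc 1 k, (1 / (σ + 1 + (r : ℝ)) - 1 / (σ + 1 - (r : ℝ)))) *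
      ∏ r ∈ Finset.Icc 1 k, (σ + 1 - (r : ℝ)) / (σ + 1 + (r : ℝ)) := by
  have hσn : ∀ r ∈ Finset.Icc 1 k, σ + 1 - (r:ℝ) ≠ 0 := by
    intro r hr hzero
    obtain ⟨hr1, hrk⟩ := Finset.mem_Icc.1 hr
    refine hσint (r-1) (by omega) ?_
    have h1 : σ = (r:ℝ) - 1 := by linarith
    rw [h1]
    push_cast [Nat.cast_sub hr1]
    ring
  have hp : p = MML5.Q k := MML5.punique k p hm hd horth
  rw [hp, MML6.momint k σ hσ]
  have hfact : ((2*k).factorial : ℝ) / ((k.factorial : ℝ))^2 = (((2*k).choose k : ℕ) : ℝ) := by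
    have h := Nat.choose_mul_factorial_mul_factorial (show k ≤ 2*k by omega)
    rw [show 2*k - k = k by omega] at h
    have h2 := congrArg (fun n : ℕ => (n:ℝ)) h
    push_cast at h2
    rw [← h2]
    have hk : (k.factorial : ℝ) ≠ 0 := Nat.cast_ne_zero.2 (Nat.factorial_ne_zero k)
    field_simp
  rw [hfact, Finset.mul_sum]
  have hterm : ∀ n ∈ Finset.range (k+1),
      (((2*k).choose k : ℕ):ℝ) * ((MML5.Q k).coeff n * (1/(σ+(n:ℝ)+1)^2))
        = MML.c k n / (σ+1+(n:ℝ))^2 := by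
    intro n hn
    rw [MML5.Qcoeff, if_pos (by simpa [Nat.lt_succ_iff] using Finset.mem_range.1 hn)]
    have hpos : (0:ℝ) < σ + (n:ℝ) + 1 := by
      have : (0:ℝ) ≤ n := Nat.cast_nonneg n
      linarith
    have hC := MML5.hC2k k
    have e1 : (σ+1+(n:ℝ)) = (σ+(n:ℝ)+1) := by ring
    rw [e1]
    calc (((2*k).choose k : ℕ):ℝ) * ((MML.c k n / ((2*k).choose k : ℝ)) * (1/(σ+(n:ℝ)+1)^2))
        = (MML.c k n / ((2*k).choose k : ℝ) * ((2*k).choose k : ℝ)) * (1/(σ+(n:ℝ)+1)^2) := by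
          ring
      _ = MML.c k n * (1/(σ+(n:ℝ)+1)^2) := by rw [div_mul_cancel₀ _ hC]
      _ = MML.c k n / (σ+(n:ℝ)+1)^2 := by rw [mul_one_div]
  rw [Finset.sum_congr rfl hterm, MML6.deriv_step k σ hσ, MML6.final_alg k σ hσ hσn]
end

section
/- Let σ be a nonnegative integer with σ < k, and let p_k be the monic shifted Legendre polynomial of degree k on [0,1]. Then the modified moment ν_k = ∫_0^1 p_k(t) t^σ ln(1/t) dt satisfies (2k)!/(k!)² · ν_k = (−1)^{k−σ} (σ!)² (k−σ−1)! / (k+σ+1)!. -/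
/-
Let `a_j` be the partial-fraction coefficients of
  `R(s) = s (s - 1) ⋯ (s - k + 1) / ((s + 1) (s + 2) ⋯ (s + k + 1)) = ∑_{j ≤ k} a_j / (s + j + 1)`
(Lagrange interpolation of the numerator at the poles `-1, …, -(k + 1)`), and `Q(t) = ∑ a_j tʲ`.
Then `∫₀¹ Q(t) tˢ dt = R(s)`, which vanishes at `s = 0, …, k - 1`; so `Q` is orthogonal to all
polynomials of degree `< k`, hence `Q = a_k p_k` with `a_k = (2k)!/(k!)²`. Since
`∫₀¹ tˢ ln(1/t) dt = 1/(s + 1)² = -d/ds (1/(s + 1))`, the scaled moment `a_k ν_k` equals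
`∑ a_j / (σ + j + 1)² = -R'(σ)`, and as `σ` is a simple zero of the numerator,
`R'(σ) = ∏_{m < k, m ≠ σ} (σ - m) / ∏_{j ≤ k} (σ + j + 1)`.
-/

open Polynomial MeasureTheory Finset Lagrange
open scoped Nat

theorem Lagrange.eval_div_eval_nodal {F ι : Type*} [Field F] [DecidableEq ι] {s : Finset ι}
    {v : ι → F} (hvs : Set.InjOn v s) {f : F[X]} (hf : f.degree < #s) {x : F}
    (hx : ∀ i ∈ s, x ≠ v i) :
    f.eval x / (nodal s v).eval x = ∑ i ∈ s, nodalWeight s v i * f.eval (v i) / (x - v i) := by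
  have h := eval_interpolate_not_at_node (fun i => f.eval (v i)) hx
  rw [← eq_interpolate hvs hf] at h
  rw [h, mul_div_cancel_left₀ _ (eval_nodal_not_at_node hx)]
  exact sum_congr rfl fun i _ => by ring

theorem Lagrange.sum_div_sq_eq_neg_eval_derivative_div {𝕜 ι : Type*}
    [NontriviallyNormedField 𝕜] [DecidableEq ι] {s : Finset ι} {v : ι → 𝕜} (hvs : Set.InjOn v s)
    {f : 𝕜[X]} (hf : f.degree < #s) {x : 𝕜} (hx : ∀ i ∈ s, x ≠ v i) (hfx : f.IsRoot x) :
    ∑ i ∈ s, nodalWeight s v i * f.eval (v i) / (x - v i) ^ 2 =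
      -(derivative f).eval x / (nodal s v).eval x := by
  -- differentiate the partial-fraction identity `eval_div_eval_nodal` at `x`
  have hsum : HasDerivAt (fun y => ∑ i ∈ s, nodalWeight s v i * f.eval (v i) / (y - v i))
      (∑ i ∈ s, -(nodalWeight s v i * f.eval (v i) / (x - v i) ^ 2)) x := by
    refine HasDerivAt.fun_sum fun i hi => ?_
    have := (((hasDerivAt_id' x).sub_const (v i)).inv (sub_ne_zero.2 (hx i hi))).const_mul
      (nodalWeight s v i * f.eval (v i))
    simp only [div_eq_mul_inv, Pi.inv_apply] at this ⊢
    exact this.congr_deriv (by ring)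
  have hquot := (f.hasDerivAt x).div ((nodal s v).hasDerivAt x) (eval_nodal_not_at_node hx)
  have heq : (fun y => f.eval y / (nodal s v).eval y) =ᶠ[nhds x]
      fun y => ∑ i ∈ s, nodalWeight s v i * f.eval (v i) / (y - v i) := by
    filter_upwards [(Filter.eventually_all_finset s).2 fun i hi => eventually_ne_nhds (hx i hi)]
      with y hy using eval_div_eval_nodal hvs hf hy
  have hderiv := (hquot.congr_of_eventuallyEq heq.symm).unique hsum
  rw [hfx.eq_zero, zero_mul, sub_zero, pow_two, ← div_div,
    mul_div_cancel_right₀ _ (eval_nodal_not_at_node hx), sum_neg_distrib] at hderiv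
  rw [neg_div, hderiv, neg_neg]

theorem integral_pow_Ioc_zero_one (n : ℕ) :
    ∫ t in Set.Ioc (0 : ℝ) 1, t ^ n = ((n : ℝ) + 1)⁻¹ := by
  rw [← intervalIntegral.integral_of_le zero_le_one, integral_pow]
  simp

theorem integrableOn_pow_mul_log_Ioc_zero_one (n : ℕ) :
    IntegrableOn (fun t : ℝ => t ^ n * Real.log t) (Set.Ioc 0 1) :=
  (intervalIntegrable_iff_integrableOn_Ioc_of_le zero_le_one).1 <|
    intervalIntegral.intervalIntegrable_log'.continuousOn_mul (continuous_pow n).continuousOn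

theorem integral_pow_mul_log_Ioc_zero_one (n : ℕ) :
    ∫ t in Set.Ioc (0 : ℝ) 1, t ^ n * Real.log t = -(((n : ℝ) + 1) ^ 2)⁻¹ := by
  let F : ℝ → ℝ := fun t => t ^ (n + 1) * Real.log t / (n + 1) - t ^ (n + 1) / (n + 1) ^ 2
  have hF : Continuous F := by
    -- continuity at `0` is that of `t * log t`
    have : F = fun t => t ^ n * (t * Real.log t) / (n + 1) - t ^ (n + 1) / (n + 1) ^ 2 := by
      ext t; simp only [F]; ring
    rw [this]
    fun_prop
  have hF' : ∀ t ∈ Set.Ioo (0 : ℝ) 1, HasDerivAt F (t ^ n * Real.log t) t := by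
    intro t ht
    have := (((hasDerivAt_pow (n + 1) t).mul (Real.hasDerivAt_log ht.1.ne')).div_const
      ((n : ℝ) + 1)).sub ((hasDerivAt_pow (n + 1) t).div_const (((n : ℝ) + 1) ^ 2))
    refine this.congr_deriv ?_
    have ht0 : t ≠ 0 := ht.1.ne'
    rw [Nat.add_sub_cancel, pow_succ]
    field_simp
    push_cast
    ring
  rw [← intervalIntegral.integral_of_le zero_le_one,
    intervalIntegral.integral_eq_sub_of_hasDeriv_right_of_le zero_le_one hF.continuousOn
      (fun t ht => (hF' t ht).hasDerivWithinAt)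
      ((intervalIntegrable_iff_integrableOn_Ioc_of_le zero_le_one).2
        (integrableOn_pow_mul_log_Ioc_zero_one n))]
  simp [F]

theorem Polynomial.eq_zero_of_integral_sq_eq_zero {a b : ℝ} (hab : a < b) {p : ℝ[X]}
    (h : ∫ t in Set.Ioc a b, p.eval t ^ 2 = 0) : p = 0 := by
  have hint : IntegrableOn (fun t => p.eval t ^ 2) (Set.Ioc a b) :=
    (p.continuous.pow 2).integrableOn_Ioc
  have hae := (integral_eq_zero_iff_of_nonneg (fun t => sq_nonneg (p.eval t)) hint).1 h
  have hIoo : Set.EqOn (fun t => p.eval t ^ 2) 0 (Set.Ioo a b) :=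
    Measure.eqOn_open_of_ae_eq (ae_restrict_of_ae_restrict_of_subset Set.Ioo_subset_Ioc_self hae)
      isOpen_Ioo (p.continuous.pow 2).continuousOn continuousOn_const
  refine p.eq_zero_of_infinite_isRoot ((Set.Ioo_infinite hab).mono fun t ht => ?_)
  simpa using hIoo ht

theorem Polynomial.integral_mul_eq_zero_of_integral_mul_pow_eq_zero {a b : ℝ} {k : ℕ}
    {p : ℝ[X]} (hp : ∀ m < k, ∫ t in Set.Ioc a b, p.eval t * t ^ m = 0) {q : ℝ[X]}
    (hq : q.degree < k) :
    ∫ t in Set.Ioc a b, p.eval t * q.eval t = 0 := by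
  rcases eq_or_ne q 0 with rfl | hq0
  · simp
  have hqk := (natDegree_lt_iff_degree_lt hq0).2 hq
  simp_rw [eval_eq_sum_range' hqk, mul_sum]
  rw [integral_finsetSum]
  · refine sum_eq_zero fun m hm => ?_
    simp_rw [mul_left_comm _ (q.coeff m)]
    rw [integral_const_mul, hp m (mem_range.1 hm), mul_zero]
  · exact fun m _ => (p.continuous.mul (continuous_const.mul (continuous_pow m))).integrableOn_Ioc

theorem Polynomial.eq_C_mul_of_orthogonal {a b : ℝ} (hab : a < b) {k : ℕ} {p q : ℝ[X]}
    (hp : p.Monic) (hpk : p.natDegree = k) (hqk : q.natDegree ≤ k)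
    (hp_orth : ∀ r : ℝ[X], r.degree < k → ∫ t in Set.Ioc a b, p.eval t * r.eval t = 0)
    (hq_orth : ∀ r : ℝ[X], r.degree < k → ∫ t in Set.Ioc a b, q.eval t * r.eval t = 0) :
    q = C (q.coeff k) * p := by
  set r := q - C (q.coeff k) * p
  have hr : r.degree < k := by
    rw [degree_lt_iff_coeff_zero]
    intro m hm
    rcases hm.lt_or_eq with hm | rfl
    · simp [r, coeff_eq_zero_of_natDegree_lt (hqk.trans_lt hm),
        coeff_eq_zero_of_natDegree_lt (hpk ▸ hm)]
    · simp [r, ← hpk, hp.coeff_natDegree]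
  have hsq : ∫ t in Set.Ioc a b, r.eval t ^ 2 = 0 := by
    have hint : ∀ f : ℝ[X], IntegrableOn (fun t => f.eval t * r.eval t) (Set.Ioc a b) :=
      fun f => (f.continuous.mul r.continuous).integrableOn_Ioc
    have hexp : ∀ t, r.eval t ^ 2 = q.eval t * r.eval t - q.coeff k * (p.eval t * r.eval t) :=
      fun t => by simp only [r, eval_sub, eval_mul, eval_C]; ring
    simp_rw [hexp]
    rw [integral_sub (hint q) ((hint p).const_mul _), integral_const_mul, hq_orth r hr,
      hp_orth r hr, mul_zero, sub_zero]
  exact (sub_eq_zero.1 (eq_zero_of_integral_sq_eq_zero hab hsq))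

section FactorialProducts

variable {R : Type*} [CommRing R]

theorem prod_range_cast_sub_eq_factorial (n : ℕ) : ∏ j ∈ range n, ((n : R) - j) = n ! := by
  rw [← descPochhammer_eval_eq_prod_range, descPochhammer_eval_eq_descFactorial,
    Nat.descFactorial_self]

theorem prod_range_sub_cast_eq_neg_one_pow_mul_factorial (n : ℕ) :
    ∏ j ∈ range n, ((j : R) - n) = (-1) ^ n * n ! := by
  calc ∏ j ∈ range n, ((j : R) - n) = ∏ j ∈ range n, (-1 * ((n : R) - j)) :=
        prod_congr rfl fun j _ => by ring
    _ = (-1) ^ n * n ! := by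
        rw [prod_mul_distrib, prod_const, card_range, prod_range_cast_sub_eq_factorial]

theorem factorial_mul_prod_range_add_add_one (c n : ℕ) :
    (c ! : R) * ∏ j ∈ range n, ((c : R) + j + 1) = (c + n)! := by
  rw [← Nat.factorial_mul_ascFactorial, Nat.ascFactorial_eq_prod_range]
  push_cast
  exact congrArg _ (prod_congr rfl fun j _ => by ring)

theorem prod_Ico_sub_eq_neg_one_pow_mul_factorial {σ k : ℕ} (h : σ < k) :
    ∏ m ∈ Ico (σ + 1) k, ((σ : R) - m) = (-1) ^ (k - 1 - σ) * (k - 1 - σ)! := by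
  rw [prod_Ico_eq_prod_range, show k - (σ + 1) = k - 1 - σ by omega]
  calc ∏ j ∈ range (k - 1 - σ), ((σ : R) - (σ + 1 + j : ℕ))
        = ∏ j ∈ range (k - 1 - σ), (-1 * ((j : R) + 1)) :=
          prod_congr rfl fun j _ => by push_cast; ring
    _ = (-1) ^ (k - 1 - σ) * (k - 1 - σ)! := by
        rw [prod_mul_distrib, prod_const, card_range, ← prod_range_add_one_eq_factorial]
        push_cast; rfl

theorem prod_range_erase_sub {σ k : ℕ} (h : σ < k) :
    ∏ m ∈ (range k).erase σ, ((σ : R) - m) = (-1) ^ (k - 1 - σ) * σ ! * (k - 1 - σ)! := by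
  have hsplit : (range k).erase σ = range σ ∪ Ico (σ + 1) k := by
    ext m; simp only [mem_erase, mem_range, mem_union, mem_Ico]; omega
  have hdisj : Disjoint (range σ) (Ico (σ + 1) k) := by
    rw [disjoint_left]; intro m hm hm'; simp only [mem_range, mem_Ico] at hm hm'; omega
  rw [hsplit, prod_union hdisj, prod_range_cast_sub_eq_factorial,
    prod_Ico_sub_eq_neg_one_pow_mul_factorial h]
  ring

end FactorialProducts

-- `R = num k / den k`, `a_j = coef k j`, `Q = poly k`.
namespace LegendreMellin

def pole (j : ℕ) : ℝ := -(j + 1)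

noncomputable def num (k : ℕ) : ℝ[X] := nodal (range k) (fun m : ℕ => (m : ℝ))

noncomputable def den (k : ℕ) : ℝ[X] := nodal (range (k + 1)) pole

noncomputable def coef (k j : ℕ) : ℝ :=
  nodalWeight (range (k + 1)) pole j * (num k).eval (pole j)

noncomputable def poly (k : ℕ) : ℝ[X] := ∑ j ∈ range (k + 1), C (coef k j) * X ^ j

theorem pole_injective : Function.Injective pole := fun i j h => by
  simpa [pole] using h

theorem sub_pole (x : ℝ) (j : ℕ) : x - pole j = x + j + 1 := by
  rw [pole]; ring

theorem ne_pole {x : ℝ} (hx : 0 ≤ x) (j : ℕ) : x ≠ pole j := by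
  rw [← sub_ne_zero, sub_pole]; positivity

theorem degree_num_lt (k : ℕ) : (num k).degree < #(range (k + 1)) := by
  rw [num, degree_nodal, card_range, card_range]
  exact_mod_cast k.lt_succ_self

theorem sum_coef_div_sub_pole {x : ℝ} (hx : 0 ≤ x) (k : ℕ) :
    ∑ j ∈ range (k + 1), coef k j / (x - pole j) = (num k).eval x / (den k).eval x :=
  (eval_div_eval_nodal pole_injective.injOn (degree_num_lt k) fun j _ => ne_pole hx j).symm

theorem sum_coef_div_sub_pole_sq {σ k : ℕ} (hσ : σ < k) :
    ∑ j ∈ range (k + 1), coef k j / ((σ : ℝ) - pole j) ^ 2 =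
      -(derivative (num k)).eval (σ : ℝ) / (den k).eval (σ : ℝ) :=
  sum_div_sq_eq_neg_eval_derivative_div pole_injective.injOn (degree_num_lt k)
    (fun j _ => ne_pole σ.cast_nonneg j) (eval_nodal_at_node (v := fun m : ℕ => (m : ℝ))
      (mem_range.2 hσ))

theorem eval_derivative_num {σ k : ℕ} (hσ : σ < k) :
    (derivative (num k)).eval (σ : ℝ) = (-1) ^ (k - 1 - σ) * σ ! * (k - 1 - σ)! := by
  rw [num, eval_nodal_derivative_eval_node_eq (v := fun m : ℕ => (m : ℝ)) (mem_range.2 hσ),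
    eval_nodal, prod_range_erase_sub hσ]

theorem factorial_mul_eval_den (σ k : ℕ) :
    (σ ! : ℝ) * (den k).eval (σ : ℝ) = (σ + k + 1)! := by
  simp_rw [den, eval_nodal, sub_pole]
  exact factorial_mul_prod_range_add_add_one σ (k + 1)

theorem coef_self (k : ℕ) : coef k k = (2 * k)! / (k ! : ℝ) ^ 2 := by
  have hw : nodalWeight (range (k + 1)) pole k = ((-1) ^ k * k ! : ℝ)⁻¹ := by
    rw [nodalWeight, range_add_one, erase_insert notMem_range_self, prod_inv_distrib,
      ← prod_range_sub_cast_eq_neg_one_pow_mul_factorial]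
    exact congrArg _ (prod_congr rfl fun j _ => by rw [pole, pole]; ring)
  have hn : (k ! : ℝ) * (num k).eval (pole k) = (-1) ^ k * (2 * k)! := by
    have hprod : ∏ m ∈ range k, (pole k - m) = ∏ m ∈ range k, (-1 * ((k : ℝ) + m + 1)) :=
      prod_congr rfl fun m _ => by rw [pole]; ring
    rw [num, eval_nodal, hprod, prod_mul_distrib, prod_const, card_range, mul_left_comm,
      factorial_mul_prod_range_add_add_one, two_mul]
  rw [coef, hw, eq_div_iff (by positivity)]
  field_simp
  linear_combination hn

theorem integral_poly_mul {g : ℝ → ℝ}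
    (hg : ∀ j : ℕ, IntegrableOn (fun t => t ^ j * g t) (Set.Ioc 0 1)) (k : ℕ) :
    ∫ t in Set.Ioc (0 : ℝ) 1, (poly k).eval t * g t =
      ∑ j ∈ range (k + 1), coef k j * ∫ t in Set.Ioc (0 : ℝ) 1, t ^ j * g t := by
  simp_rw [poly, eval_finsetSum, eval_mul, eval_C, eval_pow, eval_X, sum_mul, mul_assoc]
  rw [integral_finsetSum _ fun j _ => (hg j).const_mul _]
  exact sum_congr rfl fun j _ => integral_const_mul _ _

theorem integral_poly_mul_pow (k n : ℕ) :
    ∫ t in Set.Ioc (0 : ℝ) 1, (poly k).eval t * t ^ n =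
      (num k).eval (n : ℝ) / (den k).eval (n : ℝ) := by
  rw [integral_poly_mul (fun j => by simpa only [← pow_add] using
    (continuous_pow (j + n)).integrableOn_Ioc), ← sum_coef_div_sub_pole n.cast_nonneg]
  refine sum_congr rfl fun j _ => ?_
  simp_rw [← pow_add]
  rw [integral_pow_Ioc_zero_one, sub_pole]
  push_cast
  ring

theorem poly_orthogonal (k : ℕ) (r : ℝ[X]) (hr : r.degree < k) :
    ∫ t in Set.Ioc (0 : ℝ) 1, (poly k).eval t * r.eval t = 0 :=
  integral_mul_eq_zero_of_integral_mul_pow_eq_zero (fun m hm => by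
    rw [integral_poly_mul_pow, num, eval_nodal_at_node (v := fun m : ℕ => (m : ℝ))
      (mem_range.2 hm), zero_div]) hr

theorem integral_poly_mul_pow_mul_log (k σ : ℕ) :
    ∫ t in Set.Ioc (0 : ℝ) 1, (poly k).eval t * t ^ σ * Real.log (1 / t) =
      ∑ j ∈ range (k + 1), coef k j / ((σ : ℝ) - pole j) ^ 2 := by
  simp_rw [one_div, Real.log_inv, mul_neg, integral_neg, mul_assoc]
  rw [integral_poly_mul (fun j => by simpa only [← mul_assoc, ← pow_add] using
    integrableOn_pow_mul_log_Ioc_zero_one (j + σ)), ← sum_neg_distrib]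
  refine sum_congr rfl fun j _ => ?_
  simp_rw [← mul_assoc, ← pow_add]
  rw [integral_pow_mul_log_Ioc_zero_one, sub_pole]
  push_cast
  ring

theorem natDegree_poly_le (k : ℕ) : (poly k).natDegree ≤ k :=
  natDegree_sum_le_of_forall_le _ _ fun _ hj =>
    (natDegree_C_mul_X_pow_le _ _).trans (Nat.lt_succ_iff.1 (mem_range.1 hj))

theorem coeff_poly_self (k : ℕ) : (poly k).coeff k = coef k k := by
  simp [poly]

end LegendreMellin

open LegendreMellin in
/-- Modified moments of t^σ ln(1/t) on (0,1] relative to monic shifted Legendre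
polynomials, in the case where σ is a nonnegative integer with σ < k. -/
theorem modified_moments_log_weight_integer (k σ : ℕ) (hσ : σ < k)
    (p : Polynomial ℝ) (hm : p.Monic) (hd : p.natDegree = k)
    (horth : ∀ q : Polynomial ℝ, q.degree < (k : WithBot ℕ) →
      ∫ t in Set.Ioc (0 : ℝ) 1, p.eval t * q.eval t = 0) :
    (Nat.factorial (2 * k) : ℝ) / ((Nat.factorial k : ℝ)) ^ 2 *
      ∫ t in Set.Ioc (0 : ℝ) 1, p.eval t * t ^ σ * Real.log (1 / t) =
    (-1 : ℝ) ^ (k - σ) * (Nat.factorial σ : ℝ) ^ 2 *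
      (Nat.factorial (k - σ - 1) : ℝ) / (Nat.factorial (k + σ + 1) : ℝ) := by
  have hpoly : poly k = C (coef k k) * p := by
    rw [← coeff_poly_self]
    exact eq_C_mul_of_orthogonal zero_lt_one hm hd (natDegree_poly_le k) horth (poly_orthogonal k)
  calc (2 * k)! / (k ! : ℝ) ^ 2 *
        ∫ t in Set.Ioc (0 : ℝ) 1, p.eval t * t ^ σ * Real.log (1 / t)
      = ∫ t in Set.Ioc (0 : ℝ) 1, (poly k).eval t * t ^ σ * Real.log (1 / t) := by
        simp only [← coef_self, ← integral_const_mul, hpoly, eval_mul, eval_C, mul_assoc]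
    _ = -(derivative (num k)).eval (σ : ℝ) / (den k).eval (σ : ℝ) := by
        rw [integral_poly_mul_pow_mul_log, sum_coef_div_sub_pole_sq hσ]
    _ = (-1) ^ (k - σ) * (σ ! : ℝ) ^ 2 * (k - σ - 1)! / (k + σ + 1)! := by
        have hsign : (-1 : ℝ) ^ (k - σ) = -(-1) ^ (k - σ - 1) := by
          rw [← neg_one_mul ((-1 : ℝ) ^ _), ← pow_succ',
            Nat.sub_add_cancel (by omega : 1 ≤ k - σ)]
        have hden : (den k).eval (σ : ℝ) ≠ 0 :=
          eval_nodal_not_at_node fun j _ => ne_pole σ.cast_nonneg j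
        rw [eval_derivative_num hσ, hsign, show k - 1 - σ = k - σ - 1 by omega,
          show k + σ + 1 = σ + k + 1 by ring, ← factorial_mul_eval_den]
        field_simp
end

section
/- With notation as in the Gauss quadrature spectral theorem: if v_k is the normalized eigenvector of the Jacobi matrix J_n(dλ) corresponding to the eigenvalue x_k (a zero of π_n), then the Gauss quadrature weight is w_k = β_0 · v_{k,1}², where β_0 = ∫ dλ(t) and v_{k,1} is the first component of v_k. -/
open Polynomial MeasureTheory

lemma sum_three' {n : ℕ} (f : Fin n → ℝ) (a b c : Fin n) (hab : a ≠ b) (hac : a ≠ c) (hbc : b ≠ c)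
    (h : ∀ j, j ≠ a → j ≠ b → j ≠ c → f j = 0) :
    ∑ j, f j = f a + f b + f c := by
  have h1 : ∑ j, f j = ∑ j ∈ ({a, b, c} : Finset (Fin n)), f j := by
    symm
    apply Finset.sum_subset (Finset.subset_univ _)
    intro j _ hj
    simp only [Finset.mem_insert, Finset.mem_singleton, not_or] at hj
    exact h j hj.1 hj.2.1 hj.2.2
  rw [h1, Finset.sum_insert (by simp [hab, hac]), Finset.sum_insert (by simp [hbc]),
    Finset.sum_singleton, add_assoc]

lemma sum_two' {n : ℕ} (f : Fin n → ℝ) (a b : Fin n) (hab : a ≠ b)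
    (h : ∀ j, j ≠ a → j ≠ b → f j = 0) :
    ∑ j, f j = f a + f b := by
  have h1 : ∑ j, f j = ∑ j ∈ ({a, b} : Finset (Fin n)), f j := by
    symm
    apply Finset.sum_subset (Finset.subset_univ _)
    intro j _ hj
    simp only [Finset.mem_insert, Finset.mem_singleton, not_or] at hj
    exact h j hj.1 hj.2
  rw [h1, Finset.sum_insert (by simp [hab]), Finset.sum_singleton]

lemma int_comb (μ : Measure ℝ) (hint : ∀ p : Polynomial ℝ, Integrable (fun t => p.eval t) μ)
    (p q r : Polynomial ℝ) (a b : ℝ) :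
    ∫ t, (p + C a * q + C b * r).eval t ∂μ =
      (∫ t, p.eval t ∂μ) + a * (∫ t, q.eval t ∂μ) + b * (∫ t, r.eval t ∂μ) := by
  simp only [eval_add, eval_mul, eval_C]
  rw [integral_add (show Integrable (fun t => eval t p + a * eval t q) μ from
      (hint p).add ((hint q).const_mul a)) ((hint r).const_mul b),
    integral_add (hint p) ((hint q).const_mul a), integral_const_mul, integral_const_mul]

/-- The Gauss quadrature weight corresponding to a node x_k (an eigenvalue of
the Jacobi matrix) is β_0 times the squared first component of the associated
normalized eigenvector. -/
theorem gauss_weight_eq_beta0_mul_sq_first_component (n : ℕ) (hn : 1 ≤ n)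
    (μ : Measure ℝ)
    (hint : ∀ p : Polynomial ℝ, Integrable (fun t => p.eval t) μ)
    (hpos : ∀ p : Polynomial ℝ, p ≠ 0 → p.natDegree < n → 0 < ∫ t, (p.eval t) ^ 2 ∂μ)
    (π : ℕ → Polynomial ℝ)
    (hmonic : ∀ k ≤ n, (π k).Monic)
    (hdeg : ∀ k ≤ n, (π k).natDegree = k)
    (horth : ∀ k ≤ n, ∀ q : Polynomial ℝ, q.degree < (k : WithBot ℕ) →
      ∫ t, (π k).eval t * q.eval t ∂μ = 0)
    (α β : ℕ → ℝ) (hβpos : ∀ k, 1 ≤ k → k < n → 0 < β k)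
    (hβ0 : β 0 = ∫ t, (1 : ℝ) ∂μ)
    (hrec0 : π 1 = (X - C (α 0)) * π 0)
    (hrec : ∀ k, 1 ≤ k → k < n →
      π (k + 1) = (X - C (α k)) * π k - C (β k) * π (k - 1))
    (J : Matrix (Fin n) (Fin n) ℝ)
    (hJ : ∀ i j : Fin n, J i j =
      if (i : ℕ) = (j : ℕ) then α i
      else if (i : ℕ) + 1 = (j : ℕ) then Real.sqrt (β ((j : ℕ)))
      else if (j : ℕ) + 1 = (i : ℕ) then Real.sqrt (β ((i : ℕ)))
      else 0)
    (x : Fin n → ℝ) (hxs : StrictMono x) (hroot : ∀ i, (π n).eval (x i) = 0)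
    (w : Fin n → ℝ)
    (hw : ∀ f : Polynomial ℝ, f.degree < ((2 * n : ℕ) : WithBot ℕ) →
      ∫ t, f.eval t ∂μ = ∑ i, w i * f.eval (x i))
    (k : Fin n) (v : Fin n → ℝ)
    (hv : J.mulVec v = x k • v)
    (hnorm : ∑ i, (v i) ^ 2 = 1) :
    w k = β 0 * (v ⟨0, hn⟩) ^ 2 := by
  -- basic facts
  have hπ0 : π 0 = 1 := by
    have h0 := hmonic 0 (by omega)
    have h1 := hdeg 0 (by omega)
    exact h0.natDegree_eq_zero.mp h1
  have hπdeg : ∀ j ≤ n, (π j).degree = (j : WithBot ℕ) := by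
    intro j hj
    rw [degree_eq_natDegree (hmonic j hj).ne_zero, hdeg j hj]
  -- orthogonality in product form
  have horth' : ∀ j l : ℕ, j ≤ n → l < j → ∫ t, ((π j) * (π l)).eval t ∂μ = 0 := by
    intro j l hj hl
    simp only [eval_mul]
    apply horth j hj
    rw [hπdeg l (by omega)]
    exact_mod_cast hl
  -- the norms
  set N : ℕ → ℝ := fun j => ∫ t, ((π j) * (π j)).eval t ∂μ with hNdef
  have hNpos : ∀ j, j < n → 0 < N j := by
    intro j hj
    have := hpos (π j) (hmonic j (by omega)).ne_zero (by rw [hdeg j (by omega)]; exact hj)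
    simpa [hNdef, eval_mul, pow_two] using this
  -- the partial products of β
  set Q : ℕ → ℝ := fun j => ∏ t ∈ Finset.Icc 1 j, β t with hQdef
  have hQsucc : ∀ j, Q (j + 1) = Q j * β (j + 1) := by
    intro j
    simp only [hQdef]
    exact Finset.prod_Icc_succ_top (by omega) _
  have hQ0 : Q 0 = 1 := by simp [hQdef]
  have hQpos : ∀ j, j < n → 0 < Q j := by
    intro j hj
    apply Finset.prod_pos
    intro t ht
    rw [Finset.mem_Icc] at ht
    exact hβpos t ht.1 (by omega)
  have hN0 : N 0 = β 0 := by
    simp [hNdef, hπ0, hβ0]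
  have hβ0pos : 0 < β 0 := hN0 ▸ hNpos 0 hn
  -- norm recurrence : N (j+1) = β (j+1) * N j for j+1 < n
  have hNrec : ∀ j, j + 1 < n → N (j + 1) = β (j + 1) * N j := by
    intro j hj
    have hmj1 : (π (j + 1)).Monic := hmonic _ (by omega)
    have hmj : (π j).Monic := hmonic _ (by omega)
    have hXj : (X * π j).Monic := monic_X.mul hmj
    have hdegX : (X * π j).natDegree = j + 1 := by
      rw [natDegree_mul X_ne_zero hmj.ne_zero, natDegree_X, hdeg j (by omega)]
      omega
    have hdegr : (π (j + 1) - X * π j).degree < ((j + 1 : ℕ) : WithBot ℕ) := by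
      by_cases he : π (j + 1) = X * π j
      · rw [he, sub_self, degree_zero]
        exact WithBot.bot_lt_coe _
      · have hd : (π (j + 1)).degree = (X * π j).degree := by
          rw [hπdeg (j + 1) (by omega), degree_eq_natDegree hXj.ne_zero, hdegX]
        have := Polynomial.degree_sub_lt hd hmj1.ne_zero
          (by rw [hmj1.leadingCoeff, hXj.leadingCoeff])
        rwa [hπdeg (j + 1) (by omega)] at this
    have split : N (j + 1) = ∫ t, ((π (j + 1)) * (X * π j)).eval t ∂μ := by
      have hptw : ∀ t : ℝ, ((π (j + 1)) * (π (j + 1))).eval t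
          = ((π (j + 1)) * (X * π j)).eval t + ((π (j + 1)) * (π (j + 1) - X * π j)).eval t := by
        intro t; simp only [eval_mul, eval_sub]; ring
      have hz : ∫ t, ((π (j + 1)) * (π (j + 1) - X * π j)).eval t ∂μ = 0 := by
        simp only [eval_mul]
        exact horth (j + 1) (by omega) _ hdegr
      have hadd := integral_add (μ := μ) (hint ((π (j + 1)) * (X * π j)))
        (hint ((π (j + 1)) * (π (j + 1) - X * π j)))
      have h1 : N (j + 1) = ∫ t, (((π (j + 1)) * (X * π j)).eval t
          + ((π (j + 1)) * (π (j + 1) - X * π j)).eval t) ∂μ :=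
        integral_congr_ae (Filter.Eventually.of_forall hptw)
      rw [h1, hadd, hz, add_zero]
    have hrecj := hrec (j + 1) (by omega) hj
    simp only [Nat.add_sub_cancel] at hrecj
    have poly_id : (π (j + 1)) * (X * π j)
        = π (j + 2) * π j + C (α (j + 1)) * ((π (j + 1)) * π j) + C (β (j + 1)) * (π j * π j) := by
      rw [hrecj]; ring
    rw [split, poly_id, int_comb μ hint]
    rw [horth' (j + 2) j (by omega) (by omega), horth' (j + 1) j (by omega) (by omega)]
    simp [hNdef]
  -- norm formula
  have hNQ : ∀ j, j < n → N j = β 0 * Q j := by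
    intro j
    induction j with
    | zero => intro _; rw [hN0, hQ0, mul_one]
    | succ j ih =>
      intro hj
      rw [hNrec j hj, ih (by omega), hQsucc]
      ring
  -- quadrature exactness for products
  have hIQ : ∀ j l : Fin n, ∫ t, ((π (j : ℕ)) * (π (l : ℕ))).eval t ∂μ
      = ∑ i, w i * ((π (j : ℕ)).eval (x i) * (π (l : ℕ)).eval (x i)) := by
    intro j l
    have hdegjl : ((π (j : ℕ)) * (π (l : ℕ))).degree < ((2 * n : ℕ) : WithBot ℕ) := by
      calc ((π (j : ℕ)) * (π (l : ℕ))).degree ≤ (π (j : ℕ)).degree + (π (l : ℕ)).degree :=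
            degree_mul_le _ _
        _ = (((j : ℕ) + (l : ℕ) : ℕ) : WithBot ℕ) := by
            rw [hπdeg _ (by omega), hπdeg _ (by omega)]; exact_mod_cast rfl
        _ < ((2 * n : ℕ) : WithBot ℕ) := by
            exact_mod_cast (by omega : (j : ℕ) + (l : ℕ) < 2 * n)
    have := hw _ hdegjl
    simpa [eval_mul] using this
  -- the matrix identity
  set A : Matrix (Fin n) (Fin n) ℝ := Matrix.of (fun j i => (π (j : ℕ)).eval (x i)) with hAdef
  have hADA : A * Matrix.diagonal w * A.transpose
      = Matrix.diagonal (fun j : Fin n => N (j : ℕ)) := by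
    ext j l
    rw [Matrix.mul_apply]
    simp only [Matrix.mul_diagonal, Matrix.transpose_apply, hAdef, Matrix.of_apply]
    have hsum : ∑ i, (π (j : ℕ)).eval (x i) * w i * (π (l : ℕ)).eval (x i)
        = ∫ t, ((π (j : ℕ)) * (π (l : ℕ))).eval t ∂μ := by
      rw [hIQ j l]
      apply Finset.sum_congr rfl
      intro i _; ring
    rw [hsum]
    rcases eq_or_ne j l with he | he
    · subst he
      rw [Matrix.diagonal_apply_eq]
    · rw [Matrix.diagonal_apply_ne _ he]
      rcases lt_or_gt_of_ne (fun hc => he (Fin.ext hc) : (j : ℕ) ≠ (l : ℕ)) with hlt | hlt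
      · rw [mul_comm]
        exact horth' (l : ℕ) (j : ℕ) (by omega) hlt
      · exact horth' (j : ℕ) (l : ℕ) (by omega) hlt
  have hAone : A * (Matrix.diagonal w * A.transpose
      * Matrix.diagonal (fun j : Fin n => (N (j : ℕ))⁻¹)) = 1 := by
    calc A * (Matrix.diagonal w * A.transpose * Matrix.diagonal fun j : Fin n => (N (j : ℕ))⁻¹)
        = (A * Matrix.diagonal w * A.transpose)
            * Matrix.diagonal (fun j : Fin n => (N (j : ℕ))⁻¹) := by
          simp only [Matrix.mul_assoc]
      _ = 1 := by
          rw [hADA, Matrix.diagonal_mul_diagonal]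
          have hfun : (fun j : Fin n => N (j : ℕ) * (N (j : ℕ))⁻¹) = fun _ => 1 := by
            funext j
            exact mul_inv_cancel₀ (hNpos _ j.isLt).ne'
          rw [hfun, Matrix.diagonal_one]
  have hone : (Matrix.diagonal w * A.transpose
      * Matrix.diagonal (fun j : Fin n => (N (j : ℕ))⁻¹)) * A = 1 :=
    mul_eq_one_comm.mp hAone
  have hwk : w k * (∑ j : Fin n, ((π (j : ℕ)).eval (x k)) ^ 2 * (N (j : ℕ))⁻¹) = 1 := by
    have hkk := congrFun (congrFun hone k) k
    rw [Matrix.mul_apply] at hkk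
    simp only [Matrix.mul_diagonal, Matrix.diagonal_mul, Matrix.transpose_apply, hAdef,
      Matrix.of_apply, Matrix.one_apply_eq] at hkk
    rw [Finset.mul_sum]
    rw [← hkk]
    apply Finset.sum_congr rfl
    intro j _; ring
  -- eigenvector rows
  have row : ∀ r : Fin n, ∑ j, J r j * v j = x k * v r := by
    intro r
    have := congrFun hv r
    simpa [Matrix.mulVec, dotProduct, Pi.smul_apply, smul_eq_mul] using this
  -- the eigenvector components
  have hC : ∀ m : ℕ, ∀ hm : m < n, v ⟨m, hm⟩ * Real.sqrt (Q m) = v ⟨0, hn⟩ * (π m).eval (x k) := by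
    intro m
    induction m using Nat.strong_induction_on with
    | _ m IH =>
      match m with
      | 0 =>
        intro hm
        rw [hQ0, Real.sqrt_one, hπ0]
        simp
      | 1 =>
        intro hm
        have hr := row ⟨0, by omega⟩
        have hsum : ∑ j, J ⟨0, by omega⟩ j * v j
            = J ⟨0, by omega⟩ ⟨0, by omega⟩ * v ⟨0, by omega⟩
              + J ⟨0, by omega⟩ ⟨1, hm⟩ * v ⟨1, hm⟩ := by
          apply sum_two'
          · intro hc; exact absurd (congrArg Fin.val hc) (by simp)
          · intro j hj0 hj1
            have h0 : (j : ℕ) ≠ 0 := fun hc => hj0 (Fin.ext hc)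
            have h1 : (j : ℕ) ≠ 1 := fun hc => hj1 (Fin.ext hc)
            rw [hJ]
            simp only [Fin.val_mk]
            rw [if_neg (by omega), if_neg (by omega), if_neg (by omega), mul_eq_zero]
            left; rfl
        have hJ00 : J ⟨0, by omega⟩ ⟨0, by omega⟩ = α 0 := by rw [hJ]; simp
        have hJ01 : J ⟨0, by omega⟩ ⟨1, hm⟩ = Real.sqrt (β 1) := by
          rw [hJ]; simp
        rw [hsum, hJ00, hJ01] at hr
        have hπ1 : (π 1).eval (x k) = x k - α 0 := by
          rw [hrec0, hπ0]; simp
        have hQ1 : Q 1 = β 1 := by rw [hQsucc 0, hQ0, one_mul]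
        rw [hQ1, hπ1]
        have : v ⟨0, hn⟩ = v ⟨0, by omega⟩ := rfl
        rw [this]
        nlinarith [hr]
      | (m + 2) =>
        intro hm
        have hm1 : m + 1 < n := by omega
        have hmn : m < n := by omega
        have hr := row ⟨m + 1, hm1⟩
        have hsum : ∑ j, J ⟨m + 1, hm1⟩ j * v j
            = J ⟨m + 1, hm1⟩ ⟨m, hmn⟩ * v ⟨m, hmn⟩
              + J ⟨m + 1, hm1⟩ ⟨m + 1, hm1⟩ * v ⟨m + 1, hm1⟩
              + J ⟨m + 1, hm1⟩ ⟨m + 2, hm⟩ * v ⟨m + 2, hm⟩ := by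
          apply sum_three'
          · intro hc; exact absurd (congrArg Fin.val hc) (by simp)
          · intro hc; exact absurd (congrArg Fin.val hc) (by simp)
          · intro hc; exact absurd (congrArg Fin.val hc) (by simp)
          · intro j hja hjb hjc
            have h0 : (j : ℕ) ≠ m := fun hc => hja (Fin.ext hc)
            have h1 : (j : ℕ) ≠ m + 1 := fun hc => hjb (Fin.ext hc)
            have h2 : (j : ℕ) ≠ m + 2 := fun hc => hjc (Fin.ext hc)
            rw [hJ]
            simp only [Fin.val_mk]
            rw [if_neg (by omega), if_neg (by omega), if_neg (by omega), mul_eq_zero]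
            left; rfl
        have hJa : J ⟨m + 1, hm1⟩ ⟨m, hmn⟩ = Real.sqrt (β (m + 1)) := by
          rw [hJ]; simp only [Fin.val_mk]
          rw [if_neg (by omega : ¬(m + 1 = m)), if_neg (by omega : ¬(m + 1 + 1 = m))]
          simp
        have hJb : J ⟨m + 1, hm1⟩ ⟨m + 1, hm1⟩ = α (m + 1) := by
          rw [hJ]; simp
        have hJc : J ⟨m + 1, hm1⟩ ⟨m + 2, hm⟩ = Real.sqrt (β (m + 2)) := by
          rw [hJ]; simp only [Fin.val_mk]
          rw [if_neg (by omega : ¬(m + 1 = m + 2))]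
          simp
        rw [hsum, hJa, hJb, hJc] at hr
        -- recurrence for π at index m+1
        have hrecm := hrec (m + 1) (by omega) hm1
        simp only [Nat.add_sub_cancel] at hrecm
        have hπeval : (π (m + 2)).eval (x k)
            = (x k - α (m + 1)) * (π (m + 1)).eval (x k) - β (m + 1) * (π m).eval (x k) := by
          rw [hrecm]; simp [eval_mul, eval_sub]
        have IH1 := IH (m + 1) (by omega) hm1
        have IH2 := IH m (by omega) hmn
        have s1 : Real.sqrt (Q (m + 2)) = Real.sqrt (Q (m + 1)) * Real.sqrt (β (m + 2)) := by
          rw [hQsucc (m + 1), Real.sqrt_mul (hQpos (m + 1) hm1).le]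
        have s2 : Real.sqrt (Q (m + 1)) = Real.sqrt (Q m) * Real.sqrt (β (m + 1)) := by
          rw [hQsucc m, Real.sqrt_mul (hQpos m hmn).le]
        have s3 : Real.sqrt (β (m + 1)) * Real.sqrt (β (m + 1)) = β (m + 1) :=
          Real.mul_self_sqrt (hβpos (m + 1) (by omega) hm1).le
        rw [s1, hπeval]
        -- from hr : √β(m+1) v_m + α(m+1) v_{m+1} + √β(m+2) v_{m+2} = x k * v_{m+1}
        -- goal : v_{m+2} * (√Q(m+1) * √β(m+2)) = v0 * ((x-α)π_{m+1}(x) - β(m+1) π_m(x))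
        have key : Real.sqrt (β (m + 2)) * v ⟨m + 2, hm⟩
            = (x k - α (m + 1)) * v ⟨m + 1, hm1⟩ - Real.sqrt (β (m + 1)) * v ⟨m, hmn⟩ := by
          linarith [hr]
        calc v ⟨m + 2, hm⟩ * (Real.sqrt (Q (m + 1)) * Real.sqrt (β (m + 2)))
            = (Real.sqrt (β (m + 2)) * v ⟨m + 2, hm⟩) * Real.sqrt (Q (m + 1)) := by ring
          _ = ((x k - α (m + 1)) * v ⟨m + 1, hm1⟩ - Real.sqrt (β (m + 1)) * v ⟨m, hmn⟩)
              * Real.sqrt (Q (m + 1)) := by rw [key]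
          _ = (x k - α (m + 1)) * (v ⟨m + 1, hm1⟩ * Real.sqrt (Q (m + 1)))
              - (Real.sqrt (β (m + 1)) * Real.sqrt (β (m + 1)))
                * (v ⟨m, hmn⟩ * Real.sqrt (Q m)) := by rw [s2]; ring
          _ = (x k - α (m + 1)) * (v ⟨0, hn⟩ * (π (m + 1)).eval (x k))
              - β (m + 1) * (v ⟨0, hn⟩ * (π m).eval (x k)) := by rw [IH1, IH2, s3]
          _ = v ⟨0, hn⟩ * ((x k - α (m + 1)) * (π (m + 1)).eval (x k)
              - β (m + 1) * (π m).eval (x k)) := by ring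
  -- squared components
  have hC2 : ∀ i : Fin n, (v i) ^ 2 = (v ⟨0, hn⟩) ^ 2 * ((π (i : ℕ)).eval (x k)) ^ 2 * (Q (i : ℕ))⁻¹ := by
    intro i
    have h := hC (i : ℕ) i.isLt
    have hQi := hQpos (i : ℕ) i.isLt
    have h2 : (v i * Real.sqrt (Q (i : ℕ))) ^ 2 = (v ⟨0, hn⟩ * (π (i : ℕ)).eval (x k)) ^ 2 := by
      rw [show (⟨(i : ℕ), i.isLt⟩ : Fin n) = i from Fin.eta i i.isLt] at h
      rw [h]
    rw [mul_pow, Real.sq_sqrt hQi.le] at h2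
    field_simp at h2 ⊢
    linarith [h2]
  -- conclude
  have hT : (v ⟨0, hn⟩) ^ 2 * (∑ j : Fin n, ((π (j : ℕ)).eval (x k)) ^ 2 * (Q (j : ℕ))⁻¹) = 1 := by
    rw [Finset.mul_sum, ← hnorm]
    apply Finset.sum_congr rfl
    intro j _
    rw [hC2 j]; ring
  have hNQ' : ∀ j : Fin n, (N (j : ℕ))⁻¹ = (β 0)⁻¹ * (Q (j : ℕ))⁻¹ := by
    intro j
    rw [hNQ (j : ℕ) j.isLt, mul_inv]
  have hwk' : w k * ((β 0)⁻¹ * ∑ j : Fin n, ((π (j : ℕ)).eval (x k)) ^ 2 * (Q (j : ℕ))⁻¹) = 1 := by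
    rw [← hwk]
    congr 1
    rw [Finset.mul_sum]
    apply Finset.sum_congr rfl
    intro j _
    rw [hNQ' j]; ring
  set T := ∑ j : Fin n, ((π (j : ℕ)).eval (x k)) ^ 2 * (Q (j : ℕ))⁻¹ with hTdef
  have hTne : T ≠ 0 := by
    intro hc
    rw [hc, mul_zero] at hT
    exact one_ne_zero hT.symm
  have hv2 : (v ⟨0, hn⟩) ^ 2 = T⁻¹ := by
    field_simp at hT ⊢
    linarith [hT]
  rw [hv2]
  have : w k * ((β 0)⁻¹ * T) = 1 := hwk'
  field_simp at this ⊢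
  linarith [this]
end

section
/- Let dλ be a positive measure whose support has finite infimum x_0, let α_k, β_k be its recursion coefficients, and define α_n* = x_0 − β_n π_{n-1}(x_0)/π_n(x_0). Then the (n+1)-point quadrature rule whose nodes are the eigenvalues of the (n+1)×(n+1) tridiagonal matrix with diagonal (α_0,…,α_{n-1}, α_n*) and off-diagonals (√β_1,…,√β_n), and whose weights are β_0 times the squared first components of normalized eigenvectors, has x_0 as a node and is exact for all polynomials of degree ≤ 2n (Gauss–Radau rule). -/
/-!
If `J u = t u` with `u ≠ 0`, the rows of the Jacobi matrix are the three-term recurrence of the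
`π_j`, so `s_j u_j = u_0 π_j(t)` with `s_j = √(β_1 ⋯ β_j)`, while the modified last row says
`u_0 ω(t) = 0` for `ω = (X - α_n*) π_n - β_n π_{n-1}`. Hence `u_0 ≠ 0` and every node is a root
of `ω`; as `ω` has degree `n + 1` and the choice of `α_n*` makes `ω(x_0) = 0`, the node `x_0`
is among the `n + 1` distinct eigenvalues.

The normalized eigenvectors form an orthogonal matrix, and its column relations give
`∑ w_i π_k(x_i) = β_0 δ_{k0} = ∫ π_k dμ` for `k ≤ n`. Finally `ω = π_{n+1} + (α_n - α_n*) π_n` is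
orthogonal to all polynomials of degree `< n` and vanishes at the nodes, so dividing a polynomial
of degree `≤ 2n` by `ω` reduces exactness to degree `≤ n`.
-/

open Polynomial MeasureTheory Finset Matrix

namespace Polynomial

variable {R : Type*} [CommRing R]

theorem exists_eq_of_eval_eq_zero [IsDomain R] {ι : Type*} [Fintype ι] {p : R[X]} (hp : p ≠ 0)
    (hdeg : p.natDegree ≤ Fintype.card ι) {f : ι → R} (hf : Function.Injective f)
    (hroots : ∀ i, p.eval (f i) = 0) {y : R} (hy : p.eval y = 0) : ∃ i, f i = y := by
  by_contra! hne
  refine hp (eq_zero_of_natDegree_lt_card_of_eval_eq_zero p (f := fun o : Option ι => o.elim y f)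
    ?_ (fun o => o.rec hy hroots) (by simpa using Nat.lt_succ_of_le hdeg))
  rintro (_ | a) (_ | b) hab
  exacts [rfl, (hne b hab.symm).elim, (hne a hab).elim, congrArg some (hf hab)]

theorem linearMap_eq_of_forall_monic_eq [Nontrivial R] {M : Type*} [AddCommGroup M]
    [Module R M] {π : ℕ → R[X]} (hmonic : ∀ k, (π k).Monic) (hdeg : ∀ k, (π k).natDegree = k)
    {f g : R[X] →ₗ[R] M} {m : ℕ} (h : ∀ k ≤ m, f (π k) = g (π k)) {p : R[X]}
    (hp : p.natDegree ≤ m) : f p = g p := by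
  let S : Sequence R := ⟨π, fun k => by rw [degree_eq_natDegree (hmonic k).ne_zero, hdeg]⟩
  have hspan : p ∈ Submodule.span R (π '' Set.Iic m) := by
    rw [S.span_degreeLE fun k _ => by simp [S, (hmonic k).leadingCoeff]]
    exact mem_degreeLE.2 (natDegree_le_iff_degree_le.1 hp)
  exact LinearMap.eqOn_span' (by rintro _ ⟨k, hk, rfl⟩; exact h k hk) hspan

theorem linearMap_eq_of_natDegree_le_add [Nontrivial R] {M : Type*} [AddCommGroup M]
    [Module R M] {L S : R[X] →ₗ[R] M} {ω : R[X]} (hω : ω.Monic) {d m : ℕ}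
    (hωdeg : ω.natDegree = d + 1) (hlow : ∀ p : R[X], p.natDegree ≤ d → L p = S p)
    (hmul : ∀ q : R[X], q.natDegree ≤ m → L (ω * q) = S (ω * q))
    {f : R[X]} (hf : f.natDegree ≤ d + 1 + m) : L f = S f := by
  have hr : (f %ₘ ω).natDegree ≤ d := by
    have := natDegree_modByMonic_lt f hω fun h => by simp [h] at hωdeg
    omega
  have hq : (f /ₘ ω).natDegree ≤ m := by rw [natDegree_divByMonic f hω]; omega
  rw [← modByMonic_add_div f ω, map_add, map_add, hlow _ hr, hmul _ hq]

end Polynomial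

namespace Matrix

theorem transpose_mul_self_eq_one_of_eigenvectors {R ι : Type*} [Field R] [Fintype ι]
    [DecidableEq ι] {J : Matrix ι ι R} (hJ : Jᵀ = J) {x : ι → R} (hx : Function.Injective x)
    {v : ι → ι → R} (heig : ∀ i, J *ᵥ v i = x i • v i) (hnorm : ∀ i, ∑ j, v i j ^ 2 = 1) :
    (of v)ᵀ * of v = 1 := by
  have horth (a b : ι) (hab : a ≠ b) : v a ⬝ᵥ v b = 0 := by
    have h : x b * (v a ⬝ᵥ v b) = x a * (v a ⬝ᵥ v b) := by
      rw [← smul_eq_mul, ← dotProduct_smul, ← heig b, dotProduct_mulVec, ← hJ,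
        vecMul_transpose, heig a, smul_dotProduct, smul_eq_mul]
    have h' : (x a - x b) * (v a ⬝ᵥ v b) = 0 := by linear_combination -h
    exact (mul_eq_zero.1 h').resolve_left (sub_ne_zero.2 (hx.ne hab))
  refine mul_eq_one_comm.1 (ext fun a b => ?_)
  rw [mul_apply]
  rcases eq_or_ne a b with rfl | hab
  · simpa [sq] using hnorm a
  · simpa [hab, dotProduct] using horth a b hab

def tridiagonal {N : ℕ} (d e : ℕ → ℝ) : Matrix (Fin N) (Fin N) ℝ :=
  of fun i j =>
    if (i : ℕ) = j then d i else if (i : ℕ) + 1 = j then e j else if (j : ℕ) + 1 = i then e i else 0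

variable {N : ℕ} (d e : ℕ → ℝ)

theorem tridiagonal_transpose :
    (tridiagonal d e : Matrix (Fin N) (Fin N) ℝ)ᵀ = tridiagonal d e := by
  ext i j
  simp only [transpose_apply, tridiagonal, of_apply]
  split_ifs <;> first | rfl | omega | congr 1

/- `Function.extend Fin.val u 0` is `u` extended by zero to all of `ℕ`; summing up to `N`
rather than `N - 1` lets the last row have the same three terms as the others. -/
theorem tridiagonal_mulVec_apply (u : Fin N → ℝ) (i : Fin N) :
    (tridiagonal d e *ᵥ u) i = ∑ c ∈ range (N + 1),
      ((if c = i then d i else 0) + (if c = i + 1 then e c else 0)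
        + (if c + 1 = i then e i else 0)) * Function.extend Fin.val u 0 c := by
  have hN : Function.extend Fin.val u 0 N = 0 :=
    Function.extend_apply' (f := Fin.val) _ _ _ fun ⟨j, hj⟩ => j.isLt.ne hj
  rw [sum_range_succ, hN, mul_zero, add_zero, ← Fin.sum_univ_eq_sum_range, mulVec, dotProduct]
  refine Fintype.sum_congr _ _ fun j => ?_
  rw [Fin.val_injective.extend_apply, tridiagonal, of_apply]
  congr 1
  split_ifs <;> first | omega | simp

theorem tridiagonal_mulVec_zero (u : Fin N → ℝ) (h : 0 < N) :
    (tridiagonal d e *ᵥ u) ⟨0, h⟩ =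
      d 0 * Function.extend Fin.val u 0 0 + e 1 * Function.extend Fin.val u 0 1 := by
  rw [tridiagonal_mulVec_apply]
  simp [add_mul, sum_add_distrib, ite_mul, sum_ite_eq', h.ne']

theorem tridiagonal_mulVec_succ (u : Fin N → ℝ) (j : ℕ) (h : j + 1 < N) :
    (tridiagonal d e *ᵥ u) ⟨j + 1, h⟩ = e (j + 1) * Function.extend Fin.val u 0 j
      + d (j + 1) * Function.extend Fin.val u 0 (j + 1)
      + e (j + 2) * Function.extend Fin.val u 0 (j + 2) := by
  rw [tridiagonal_mulVec_apply]
  simp only [Nat.add_right_cancel_iff, add_mul, ite_mul, zero_mul, sum_add_distrib, sum_ite_eq',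
    mem_range, Order.lt_add_one_iff, h.le, ↓reduceIte, Order.add_one_le_iff, h, show j ≤ N by omega]
  ring

end Matrix

noncomputable def sqrtProd (β : ℕ → ℝ) (j : ℕ) : ℝ := ∏ k ∈ Icc 1 j, √(β k)

section SqrtProd

variable {β : ℕ → ℝ}

@[simp]
theorem sqrtProd_zero : sqrtProd β 0 = 1 := by simp [sqrtProd]

theorem sqrtProd_succ (j : ℕ) : sqrtProd β (j + 1) = sqrtProd β j * √(β (j + 1)) :=
  prod_Icc_succ_top (by omega) _

theorem sqrtProd_pos (hβ : ∀ k, 1 ≤ k → 0 < β k) (j : ℕ) : 0 < sqrtProd β j :=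
  prod_pos fun k hk => Real.sqrt_pos.2 (hβ k (mem_Icc.1 hk).1)

end SqrtProd

noncomputable def radauPolynomial (π : ℕ → ℝ[X]) (β : ℕ → ℝ) (a : ℝ) (n : ℕ) : ℝ[X] :=
  (X - C a) * π n - C (β n) * π (n - 1)

section RadauPolynomial

variable {π : ℕ → ℝ[X]} {α β : ℕ → ℝ} {a t : ℝ} {n : ℕ}

theorem radauPolynomial_monic_and_natDegree (hmonic : ∀ k, (π k).Monic)
    (hdeg : ∀ k, (π k).natDegree = k) :
    (radauPolynomial π β a n).Monic ∧ (radauPolynomial π β a n).natDegree = n + 1 := by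
  have hlead : ((X - C a) * π n).natDegree = n + 1 := by
    rw [(monic_X_sub_C a).natDegree_mul (hmonic n), natDegree_X_sub_C, hdeg, add_comm]
  have htail : (C (β n) * π (n - 1)).natDegree < n + 1 :=
    (natDegree_C_mul_le _ _).trans_lt (by rw [hdeg]; omega)
  refine ⟨((monic_X_sub_C a).mul (hmonic n)).sub_of_left ?_, ?_⟩
  · exact degree_lt_degree (hlead ▸ htail)
  · rw [radauPolynomial, natDegree_sub_eq_left_of_natDegree_lt (hlead ▸ htail), hlead]

theorem eval_radauPolynomial_eq_zero {x₀ : ℝ} (hπn : (π n).eval x₀ ≠ 0)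
    (ha : a = x₀ - β n * (π (n - 1)).eval x₀ / (π n).eval x₀) :
    (radauPolynomial π β a n).eval x₀ = 0 := by
  simp only [radauPolynomial, ha, eval_sub, eval_mul, eval_X, eval_C]
  field_simp
  ring

theorem radauPolynomial_eq_add
    (hrec : π (n + 1) = (X - C (α n)) * π n - C (β n) * π (n - 1)) :
    radauPolynomial π β a n = π (n + 1) + C (α n - a) * π n := by
  rw [radauPolynomial, hrec, C_sub]
  ring

theorem sqrtProd_mul_eq_eval {V : ℕ → ℝ} (hπ0 : π 0 = 1) (hrec0 : π 1 = (X - C (α 0)) * π 0)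
    (hrec : ∀ k, 1 ≤ k → π (k + 1) = (X - C (α k)) * π k - C (β k) * π (k - 1))
    (hβ : ∀ k, 1 ≤ k → 0 ≤ β k) (hrow0 : t * V 0 = α 0 * V 0 + √(β 1) * V 1)
    (hrow : ∀ j, j + 1 < n → t * V (j + 1) =
      √(β (j + 1)) * V j + α (j + 1) * V (j + 1) + √(β (j + 2)) * V (j + 2)) :
    ∀ j ≤ n, sqrtProd β j * V j = V 0 * (π j).eval t := by
  intro j
  induction j using Nat.twoStepInduction with
  | zero => simp [hπ0]
  | one =>
    intro _
    rw [hrec0, hπ0, sqrtProd_succ, sqrtProd_zero]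
    simp only [eval_mul, eval_sub, eval_X, eval_C, eval_one]
    linarith
  | more j ih₀ ih₁ =>
    intro hj
    have hsq : √(β (j + 1)) ^ 2 = β (j + 1) := Real.sq_sqrt (hβ _ (by omega))
    rw [hrec (j + 1) (by omega), sqrtProd_succ (j + 1)]
    simp only [eval_mul, eval_sub, eval_X, eval_C, Nat.add_sub_cancel]
    linear_combination (-sqrtProd β (j + 1)) * hrow j (by omega) + (t - α (j + 1)) * ih₁ (by omega)
      - β (j + 1) * ih₀ (by omega) - sqrtProd β j * V j * hsq
      - √(β (j + 1)) * V j * sqrtProd_succ (β := β) j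

theorem mul_eval_radauPolynomial_eq_zero {V : ℕ → ℝ} (hn : 1 ≤ n) (hβ : 0 ≤ β n)
    (hcomp : ∀ j ≤ n, sqrtProd β j * V j = V 0 * (π j).eval t)
    (hlast : t * V n = √(β n) * V (n - 1) + a * V n) :
    V 0 * (radauPolynomial π β a n).eval t = 0 := by
  obtain ⟨m, rfl⟩ : ∃ m, n = m + 1 := ⟨n - 1, by omega⟩
  have hsq : √(β (m + 1)) ^ 2 = β (m + 1) := Real.sq_sqrt hβ
  simp only [radauPolynomial, eval_sub, eval_mul, eval_X, eval_C, Nat.add_sub_cancel] at hlast ⊢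
  linear_combination (a - t) * hcomp (m + 1) le_rfl + β (m + 1) * hcomp m (by omega)
    + sqrtProd β (m + 1) * hlast + sqrtProd β m * V m * hsq
    + √(β (m + 1)) * V m * sqrtProd_succ (β := β) m

theorem tridiagonal_eigenvector_components (hπ0 : π 0 = 1) (hrec0 : π 1 = (X - C (α 0)) * π 0)
    (hrec : ∀ k, 1 ≤ k → π (k + 1) = (X - C (α k)) * π k - C (β k) * π (k - 1))
    (hβ : ∀ k, 1 ≤ k → 0 ≤ β k) (hn : 1 ≤ n) {u : Fin (n + 1) → ℝ}
    (heig : tridiagonal (fun k => if k < n then α k else a) (fun k => √(β k)) *ᵥ u = t • u) :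
    (∀ j : Fin (n + 1), sqrtProd β j * u j = u 0 * (π j).eval t) ∧
      u 0 * (radauPolynomial π β a n).eval t = 0 := by
  set V := Function.extend Fin.val u 0 with hVdef
  have hV (j : Fin (n + 1)) : V j = u j := Fin.val_injective.extend_apply _ _ _
  have hV0 : V 0 = u 0 := hV 0
  have hVn : V (n + 1) = 0 :=
    Function.extend_apply' (f := Fin.val) _ _ _ fun ⟨j, hj⟩ => j.isLt.ne hj
  have hrow0 : t * V 0 = α 0 * V 0 + √(β 1) * V 1 := by
    have h := congrFun heig ⟨0, n.succ_pos⟩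
    rw [tridiagonal_mulVec_zero, if_pos (show 0 < n by omega), Pi.smul_apply, smul_eq_mul,
      ← hVdef, ← hV] at h
    exact h.symm
  have hrow (j : ℕ) (hj : j + 1 < n + 1) : t * V (j + 1) = √(β (j + 1)) * V j
      + (if j + 1 < n then α (j + 1) else a) * V (j + 1) + √(β (j + 2)) * V (j + 2) := by
    have h := congrFun heig ⟨j + 1, hj⟩
    rw [tridiagonal_mulVec_succ, Pi.smul_apply, smul_eq_mul, ← hVdef, ← hV] at h
    exact h.symm
  have hcomp := sqrtProd_mul_eq_eval (n := n) hπ0 hrec0 hrec hβ hrow0 fun j hj => by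
    rw [hrow j (by omega), if_pos hj]
  refine ⟨fun j => by simpa only [hV, hV0] using hcomp j j.is_le, ?_⟩
  have hlast := hrow (n - 1) (by omega)
  rw [Nat.sub_add_cancel hn, show n - 1 + 2 = n + 1 by omega, if_neg (lt_irrefl n), hVn,
    mul_zero, add_zero] at hlast
  simpa only [hV0] using mul_eval_radauPolynomial_eq_zero hn (hβ n hn) hcomp hlast

theorem eval_radauPolynomial_eq_zero_of_mulVec_eq (hπ0 : π 0 = 1)
    (hrec0 : π 1 = (X - C (α 0)) * π 0)
    (hrec : ∀ k, 1 ≤ k → π (k + 1) = (X - C (α k)) * π k - C (β k) * π (k - 1))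
    (hβ : ∀ k, 1 ≤ k → 0 < β k) (hn : 1 ≤ n) {u : Fin (n + 1) → ℝ} (hu : u ≠ 0)
    (heig : tridiagonal (fun k => if k < n then α k else a) (fun k => √(β k)) *ᵥ u = t • u) :
    (radauPolynomial π β a n).eval t = 0 := by
  obtain ⟨hcomp, hroot⟩ :=
    tridiagonal_eigenvector_components hπ0 hrec0 hrec (fun k hk => (hβ k hk).le) hn heig
  refine (mul_eq_zero.1 hroot).resolve_left fun h0 => hu (funext fun j => ?_)
  have := hcomp j
  rw [h0, zero_mul] at this
  exact (mul_eq_zero.1 this).resolve_left (sqrtProd_pos hβ j).ne'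

end RadauPolynomial

@[simps]
noncomputable def integralLinearMap (μ : Measure ℝ)
    (hint : ∀ p : ℝ[X], Integrable (fun t => p.eval t) μ) : ℝ[X] →ₗ[ℝ] ℝ where
  toFun p := ∫ t, p.eval t ∂μ
  map_add' p q := by simp only [eval_add]; exact integral_add (hint p) (hint q)
  map_smul' c p := by
    simp only [eval_smul, smul_eq_mul, RingHom.id_apply]
    exact integral_const_mul c _

section Orthogonal

variable {μ : Measure ℝ} {π : ℕ → ℝ[X]}

theorem integral_eval_eq_ite {β : ℕ → ℝ} (hπ0 : π 0 = 1)
    (horth : ∀ k l, k ≠ l → ∫ t, (π k).eval t * (π l).eval t ∂μ = 0)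
    (hβ0 : β 0 = ∫ _, (1 : ℝ) ∂μ) (k : ℕ) :
    ∫ t, (π k).eval t ∂μ = if k = 0 then β 0 else 0 := by
  cases k with
  | zero => simp [hπ0, hβ0]
  | succ k => simpa [hπ0] using horth (k + 1) 0 k.succ_ne_zero

theorem integral_radauPolynomial_mul_eq_zero
    (hint : ∀ p : ℝ[X], Integrable (fun t => p.eval t) μ) (hmonic : ∀ k, (π k).Monic)
    (hdeg : ∀ k, (π k).natDegree = k)
    (horth : ∀ k l, k ≠ l → ∫ t, (π k).eval t * (π l).eval t ∂μ = 0) {α β : ℕ → ℝ} {a : ℝ}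
    {n : ℕ} (hrec : π (n + 1) = (X - C (α n)) * π n - C (β n) * π (n - 1)) {q : ℝ[X]}
    (hq : q.natDegree < n) :
    integralLinearMap μ hint (radauPolynomial π β a n * q) = 0 := by
  refine linearMap_eq_of_forall_monic_eq hmonic hdeg (f := integralLinearMap μ hint ∘ₗ
    LinearMap.mulLeft ℝ (radauPolynomial π β a n)) (g := 0) (m := n - 1) (fun k hk => ?_)
    (by omega)
  rw [LinearMap.comp_apply, LinearMap.mulLeft_apply, radauPolynomial_eq_add hrec, add_mul,
    mul_assoc, map_add, ← smul_eq_C_mul, map_smul]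
  simp only [integralLinearMap_apply, eval_mul]
  rw [horth _ k (by omega), horth _ k (by omega), smul_zero, add_zero, LinearMap.zero_apply]

end Orthogonal

theorem sum_mul_eval_eq_ite {n : ℕ} {β : ℕ → ℝ} {π : ℕ → ℝ[X]} {x : Fin (n + 1) → ℝ}
    {v : Fin (n + 1) → Fin (n + 1) → ℝ} (hcol : (of v)ᵀ * of v = 1)
    (hcomp : ∀ i (j : Fin (n + 1)), sqrtProd β j * v i j = v i 0 * (π j).eval (x i))
    {w : Fin (n + 1) → ℝ} (hw : ∀ i, w i = β 0 * v i 0 ^ 2) {k : ℕ} (hk : k ≤ n) :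
    ∑ i, w i * (π k).eval (x i) = if k = 0 then β 0 else 0 := by
  set k' : Fin (n + 1) := ⟨k, by omega⟩
  calc ∑ i, w i * (π k).eval (x i) = β 0 * sqrtProd β k * ((of v)ᵀ * of v) 0 k' := by
        rw [mul_apply, mul_sum]
        refine Fintype.sum_congr _ _ fun i => ?_
        rw [hw, transpose_apply, of_apply, of_apply]
        linear_combination (-(β 0 * v i 0)) * hcomp i k'
    _ = if k = 0 then β 0 else 0 := by
        rw [hcol, one_apply]
        rcases Nat.eq_zero_or_pos k with rfl | hk0
        · simp [k']
        · simp [k', Fin.ext_iff, hk0.ne, hk0.ne']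

theorem gauss_radau_quadrature_general (n : ℕ) (hn : 1 ≤ n)
    (μ : Measure ℝ)
    (hint : ∀ p : Polynomial ℝ, Integrable (fun t => p.eval t) μ)
    (x0 : ℝ)
    (π : ℕ → Polynomial ℝ)
    (hmonic : ∀ k, (π k).Monic)
    (hdeg : ∀ k, (π k).natDegree = k)
    (horth : ∀ k l, k ≠ l → ∫ t, (π k).eval t * (π l).eval t ∂μ = 0)
    (α β : ℕ → ℝ) (hβpos : ∀ k, 1 ≤ k → 0 < β k)
    (hβ0 : β 0 = ∫ t, (1 : ℝ) ∂μ)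
    (hrec0 : π 1 = (X - C (α 0)) * π 0)
    (hrec : ∀ k, 1 ≤ k → π (k + 1) = (X - C (α k)) * π k - C (β k) * π (k - 1))
    (hπn : (π n).eval x0 ≠ 0)
    (αstar : ℝ)
    (hαstar : αstar = x0 - β n * (π (n - 1)).eval x0 / (π n).eval x0)
    (J : Matrix (Fin (n + 1)) (Fin (n + 1)) ℝ)
    (hJ : ∀ i j : Fin (n + 1), J i j =
      if (i : ℕ) = (j : ℕ) then (if (i : ℕ) < n then α i else αstar)
      else if (i : ℕ) + 1 = (j : ℕ) then Real.sqrt (β ((j : ℕ)))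
      else if (j : ℕ) + 1 = (i : ℕ) then Real.sqrt (β ((i : ℕ)))
      else 0)
    (x : Fin (n + 1) → ℝ) (v : Fin (n + 1) → Fin (n + 1) → ℝ)
    (hxs : StrictMono x)
    (heig : ∀ i, J.mulVec (v i) = x i • v i)
    (hnorm : ∀ i, ∑ j, (v i j) ^ 2 = 1)
    (w : Fin (n + 1) → ℝ)
    (hw : ∀ i, w i = β 0 * (v i 0) ^ 2) :
    (∃ i, x i = x0) ∧
    ∀ f : Polynomial ℝ, f.degree ≤ ((2 * n : ℕ) : WithBot ℕ) →
      ∫ t, f.eval t ∂μ = ∑ i, w i * f.eval (x i) := by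
  have hπ0 : π 0 = 1 := (hmonic 0).natDegree_eq_zero.1 (hdeg 0)
  obtain rfl : J = tridiagonal (fun k => if k < n then α k else αstar) (fun k => √(β k)) := ext hJ
  have hroot (i : Fin (n + 1)) : (radauPolynomial π β αstar n).eval (x i) = 0 :=
    eval_radauPolynomial_eq_zero_of_mulVec_eq hπ0 hrec0 hrec hβpos hn
      (fun h => by simpa [h] using hnorm i) (heig i)
  obtain ⟨hωmonic, hωdeg⟩ := radauPolynomial_monic_and_natDegree (β := β) (a := αstar) hmonic hdeg
  refine ⟨exists_eq_of_eval_eq_zero hωmonic.ne_zero (by simp [hωdeg]) hxs.injective hroot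
    (eval_radauPolynomial_eq_zero hπn hαstar), fun f hf => ?_⟩
  have hcol := transpose_mul_self_eq_one_of_eigenvectors (tridiagonal_transpose _ _)
    hxs.injective heig hnorm
  have hcomp (i j : Fin (n + 1)) : sqrtProd β j * v i j = v i 0 * (π j).eval (x i) :=
    (tridiagonal_eigenvector_components hπ0 hrec0 hrec (fun k hk => (hβpos k hk).le) hn
      (heig i)).1 j
  have key : integralLinearMap μ hint f = (∑ i, w i • leval (x i)) f := by
    refine linearMap_eq_of_natDegree_le_add hωmonic hωdeg (m := n - 1) (fun p hp => ?_)
      (fun q hq => ?_) (by have := natDegree_le_iff_degree_le.2 hf; omega)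
    · refine linearMap_eq_of_forall_monic_eq hmonic hdeg (fun k hk => ?_) hp
      simp [integral_eval_eq_ite hπ0 horth hβ0, sum_mul_eval_eq_ite hcol hcomp hw hk]
    · rw [integral_radauPolynomial_mul_eq_zero hint hmonic hdeg horth (hrec n hn) (by omega)]
      simp [hroot]
  simpa using key

/-- Gauss–Radau quadrature: the (n+1)-point rule built from the modified Jacobi
matrix with last diagonal entry α_n* = x₀ - β_n π_{n-1}(x₀)/π_n(x₀) has x₀ as
a node and is exact for all polynomials of degree ≤ 2n. -/
theorem gauss_radau_quadrature (n : ℕ) (hn : 1 ≤ n)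
    (μ : Measure ℝ)
    (hint : ∀ p : Polynomial ℝ, Integrable (fun t => p.eval t) μ)
    (hpos : ∀ p : Polynomial ℝ, p ≠ 0 → 0 < ∫ t, (p.eval t) ^ 2 ∂μ)
    (x0 : ℝ) (hlow : ∀ᵐ t ∂μ, x0 ≤ t)
    (π : ℕ → Polynomial ℝ)
    (hmonic : ∀ k, (π k).Monic)
    (hdeg : ∀ k, (π k).natDegree = k)
    (horth : ∀ k l, k ≠ l → ∫ t, (π k).eval t * (π l).eval t ∂μ = 0)
    (α β : ℕ → ℝ) (hβpos : ∀ k, 1 ≤ k → 0 < β k)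
    (hβ0 : β 0 = ∫ t, (1 : ℝ) ∂μ)
    (hrec0 : π 1 = (X - C (α 0)) * π 0)
    (hrec : ∀ k, 1 ≤ k → π (k + 1) = (X - C (α k)) * π k - C (β k) * π (k - 1))
    (hπn : (π n).eval x0 ≠ 0)
    (αstar : ℝ)
    (hαstar : αstar = x0 - β n * (π (n - 1)).eval x0 / (π n).eval x0)
    (J : Matrix (Fin (n + 1)) (Fin (n + 1)) ℝ)
    (hJ : ∀ i j : Fin (n + 1), J i j =
      if (i : ℕ) = (j : ℕ) then (if (i : ℕ) < n then α i else αstar)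
      else if (i : ℕ) + 1 = (j : ℕ) then Real.sqrt (β ((j : ℕ)))
      else if (j : ℕ) + 1 = (i : ℕ) then Real.sqrt (β ((i : ℕ)))
      else 0)
    (x : Fin (n + 1) → ℝ) (v : Fin (n + 1) → Fin (n + 1) → ℝ)
    (hxs : StrictMono x)
    (heig : ∀ i, J.mulVec (v i) = x i • v i)
    (hnorm : ∀ i, ∑ j, (v i j) ^ 2 = 1)
    (w : Fin (n + 1) → ℝ)
    (hw : ∀ i, w i = β 0 * (v i 0) ^ 2) :
    (∃ i, x i = x0) ∧
    ∀ f : Polynomial ℝ, f.degree ≤ ((2 * n : ℕ) : WithBot ℕ) →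
      ∫ t, f.eval t ∂μ = ∑ i, w i * f.eval (x i) :=
  gauss_radau_quadrature_general n hn μ hint x0 π hmonic hdeg horth α β hβpos hβ0 hrec0 hrec hπn
    αstar hαstar J hJ x v hxs heig hnorm w hw
end

section
/- For the measure dλ_ω(t) = [(1 − ω²t²)(1 − t²)]^{−1/2} dt on (−1,1) with 0 ≤ ω < 1, the modified moments relative to monic Chebyshev polynomials of the first kind satisfy ν_{2m−1} = 0 for all m ≥ 1, ν_0 = π C_0(ω²), and ν_{2m} = (−1)^m π 2^{1−2m} C_m(ω²) for m ≥ 1, where C_r(ω²) are the Fourier coefficients in (1 − ω² sin²θ)^{−1/2} = C_0(ω²) + 2 Σ_{r≥1} C_r(ω²) cos(2rθ). -/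
open Polynomial MeasureTheory

open Real Set
section
-- image of Ioo under cos
lemma cos_image_Ioo' : Real.cos '' Set.Ioo 0 Real.pi = Set.Ioo (-1:ℝ) 1 := by
  ext t
  constructor
  · rintro ⟨θ, ⟨h0, hπ⟩, rfl⟩
    constructor
    · have := Real.strictAntiOn_cos ⟨h0.le, hπ.le⟩ ⟨Real.pi_pos.le, le_refl _⟩ hπ
      simpa using this
    · have := Real.strictAntiOn_cos ⟨le_refl _, Real.pi_pos.le⟩ ⟨h0.le, hπ.le⟩ h0
      simpa using this
  · rintro ⟨h1, h2⟩
    refine ⟨Real.arccos t, ⟨Real.arccos_pos.2 h2, ?_⟩, Real.cos_arccos h1.le h2.le⟩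
    rcases lt_or_eq_of_le (Real.arccos_le_pi t) with h | h
    · exact h
    · exact absurd (Real.arccos_eq_pi.1 h) (by linarith)

set_option maxHeartbeats 1000000 in
lemma cov (ω : ℝ) (hω0 : 0 ≤ ω) (hω1 : ω < 1) (n : ℕ) :
    (∫ t in Set.Ioo (-1:ℝ) 1,
        (Polynomial.Chebyshev.T ℝ (n:ℤ)).eval t / Real.sqrt ((1 - ω^2*t^2)*(1-t^2)))
    = ∫ θ in (0:ℝ)..Real.pi, Real.cos (n*θ) / Real.sqrt (1 - ω^2 * Real.cos θ ^2) := by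
  have hω2 : ω^2 < 1 := by nlinarith
  have hpos : ∀ θ : ℝ, 0 < 1 - ω^2 * Real.cos θ ^2 := by
    intro θ
    nlinarith [Real.cos_sq_le_one θ, sq_nonneg (Real.cos θ), sq_nonneg ω]
  set F : ℝ → ℝ := fun t => (Polynomial.Chebyshev.T ℝ (n:ℤ)).eval t / Real.sqrt ((1 - ω^2*t^2)*(1-t^2)) with hF
  have key := MeasureTheory.integral_image_eq_integral_abs_deriv_smul
    (s := Set.Ioo 0 Real.pi) (f := Real.cos) (f' := fun θ => -Real.sin θ)
    measurableSet_Ioo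
    (fun x _ => (Real.hasDerivAt_cos x).hasDerivWithinAt)
    (Real.injOn_cos.mono Set.Ioo_subset_Icc_self)
    F
  rw [cos_image_Ioo'] at key
  rw [key]
  rw [intervalIntegral.integral_of_le Real.pi_pos.le, MeasureTheory.integral_Ioc_eq_integral_Ioo]
  refine MeasureTheory.integral_congr_ae ?_
  rw [Filter.EventuallyEq, MeasureTheory.ae_restrict_iff' measurableSet_Ioo]
  filter_upwards with θ hθ
  obtain ⟨h0, hπ⟩ := hθ
  have hs : 0 < Real.sin θ := Real.sin_pos_of_pos_of_lt_pi h0 hπ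
  have hT : (Polynomial.Chebyshev.T ℝ (n:ℤ)).eval (Real.cos θ) = Real.cos (n * θ) := by
    simpa using Polynomial.Chebyshev.T_real_cos θ (n:ℤ)
  have hsq : Real.sqrt ((1 - ω^2*(Real.cos θ)^2)*(1-(Real.cos θ)^2))
      = Real.sqrt (1 - ω^2 * Real.cos θ ^2) * Real.sin θ := by
    rw [Real.sqrt_mul (hpos θ).le]
    congr 1
    rw [show (1:ℝ) - Real.cos θ ^2 = Real.sin θ ^2 by nlinarith [Real.sin_sq_add_cos_sq θ]]
    exact Real.sqrt_sq hs.le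
  have hd : Real.sqrt (1 - ω^2 * Real.cos θ ^2) ≠ 0 :=
    (Real.sqrt_pos.2 (hpos θ)).ne'
  simp only [smul_eq_mul, hF]
  rw [hT, hsq, abs_neg, abs_of_pos hs]
  field_simp

lemma oddJ (ω : ℝ) (n : ℕ) (hn : Odd n) :
    ∫ θ in (0:ℝ)..Real.pi, Real.cos (n*θ) / Real.sqrt (1 - ω^2 * Real.cos θ^2) = 0 := by
  set f : ℝ → ℝ := fun θ => Real.cos (n*θ) / Real.sqrt (1 - ω^2 * Real.cos θ^2) with hf
  have h1 : ∀ x, f (Real.pi - x) = - f x := by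
    intro x
    simp only [hf]
    rw [Real.cos_pi_sub, neg_sq,
      show (n:ℝ) * (Real.pi - x) = n*Real.pi - n*x by ring,
      Real.cos_nat_mul_pi_sub, Odd.neg_one_pow hn, neg_one_mul, neg_div]
  have h2 : ∫ x in (0:ℝ)..Real.pi, f (Real.pi - x) = ∫ x in (0:ℝ)..Real.pi, f x := by
    rw [intervalIntegral.integral_comp_sub_left f Real.pi]
    norm_num
  have h3 : ∫ x in (0:ℝ)..Real.pi, f (Real.pi - x) = -∫ x in (0:ℝ)..Real.pi, f x := by
    simp only [h1]
    exact intervalIntegral.integral_neg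
  linarith

lemma evenJ (ω : ℝ) (m : ℕ) :
    ∫ θ in (0:ℝ)..Real.pi, Real.cos ((2*m : ℕ)*θ) / Real.sqrt (1 - ω^2 * Real.cos θ^2)
    = (-1:ℝ)^m * ∫ θ in (0:ℝ)..Real.pi, Real.cos (2*(m:ℝ)*θ) / Real.sqrt (1 - ω^2 * Real.sin θ^2) := by
  set g : ℝ → ℝ := fun θ => Real.cos (2*(m:ℝ)*θ) / Real.sqrt (1 - ω^2 * Real.sin θ^2) with hg
  have hper : Function.Periodic g Real.pi := by
    intro x
    simp only [hg]
    rw [Real.sin_add_pi, neg_sq,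
      show 2*(m:ℝ)*(x + Real.pi) = 2*(m:ℝ)*x + (m:ℤ)*(2*Real.pi) by push_cast; ring,
      Real.cos_add_int_mul_two_pi]
  have hcomp : ∀ θ : ℝ, Real.cos ((2*m : ℕ)*θ) / Real.sqrt (1 - ω^2 * Real.cos θ^2)
      = (-1:ℝ)^m * g (θ - Real.pi/2) := by
    intro θ
    simp only [hg]
    have h1 : Real.sin (θ - Real.pi/2) = -Real.cos θ := by
      rw [Real.sin_sub, Real.sin_pi_div_two, Real.cos_pi_div_two]
      ring
    have h2 : Real.cos (2*(m:ℝ)*(θ - Real.pi/2)) = (-1:ℝ)^m * Real.cos ((2*m:ℕ)*θ) := by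
      rw [show 2*(m:ℝ)*(θ - Real.pi/2) = -((m:ℕ)*Real.pi - 2*(m:ℝ)*θ) by ring,
        Real.cos_neg, Real.cos_nat_mul_pi_sub]
      push_cast
      ring
    rw [h1, neg_sq, h2]
    rw [show ((-1:ℝ)^m * ((-1:ℝ)^m * Real.cos ((2*m:ℕ)*θ) / Real.sqrt (1 - ω^2 * Real.cos θ^2)))
        = ((-1:ℝ)^m * (-1:ℝ)^m) * (Real.cos ((2*m:ℕ)*θ) / Real.sqrt (1 - ω^2 * Real.cos θ^2)) by ring,
      ← pow_add, Even.neg_one_pow ⟨m, by ring⟩, one_mul]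
  calc ∫ θ in (0:ℝ)..Real.pi, Real.cos ((2*m : ℕ)*θ) / Real.sqrt (1 - ω^2 * Real.cos θ^2)
      = ∫ θ in (0:ℝ)..Real.pi, (-1:ℝ)^m * g (θ - Real.pi/2) := by
        simp only [hcomp]
    _ = (-1:ℝ)^m * ∫ θ in (0:ℝ)..Real.pi, g (θ - Real.pi/2) := intervalIntegral.integral_const_mul _ _
    _ = (-1:ℝ)^m * ∫ θ in (-(Real.pi/2))..Real.pi/2, g θ := by
        rw [intervalIntegral.integral_comp_sub_right g (Real.pi/2)]
        rw [show Real.pi - Real.pi/2 = Real.pi/2 by ring, zero_sub]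
    _ = (-1:ℝ)^m * ∫ θ in (0:ℝ)..Real.pi, g θ := by
        congr 1
        have := hper.intervalIntegral_add_eq (-(Real.pi/2)) 0
        rw [show -(Real.pi/2) + Real.pi = Real.pi/2 by ring, zero_add] at this
        exact this
end

/-- Modified moments of dλ_ω(t) = [(1-ω²t²)(1-t²)]^{-1/2} dt on (-1,1) relative
to monic Chebyshev polynomials of the first kind, expressed in terms of the
Fourier coefficients C_r(ω²) of (1-ω² sin²θ)^{-1/2}. -/
theorem modified_moments_elliptic_weight (ω : ℝ) (hω0 : 0 ≤ ω) (hω1 : ω < 1)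
    (p : ℕ → Polynomial ℝ) (hp0 : p 0 = 1)
    (hpk : ∀ k : ℕ, 1 ≤ k →
      p k = Polynomial.C ((2 : ℝ) ^ (1 - (k : ℤ))) * Polynomial.Chebyshev.T ℝ (k : ℤ))
    (Cf : ℕ → ℝ)
    (hC : ∀ r : ℕ, Cf r = (1 / Real.pi) *
      ∫ θ in (0 : ℝ)..Real.pi,
        Real.cos (2 * (r : ℝ) * θ) / Real.sqrt (1 - ω ^ 2 * Real.sin θ ^ 2))
    (ν : ℕ → ℝ)
    (hν : ∀ k, ν k = ∫ t in Set.Ioo (-1 : ℝ) 1,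
      (p k).eval t / Real.sqrt ((1 - ω ^ 2 * t ^ 2) * (1 - t ^ 2))) :
    (∀ m : ℕ, 1 ≤ m → ν (2 * m - 1) = 0) ∧
    ν 0 = Real.pi * Cf 0 ∧
    (∀ m : ℕ, 1 ≤ m →
      ν (2 * m) = (-1 : ℝ) ^ m * Real.pi * (2 : ℝ) ^ (1 - 2 * (m : ℤ)) * Cf m) := by
  have key : ∀ k : ℕ, 1 ≤ k → ν k = (2:ℝ) ^ (1 - (k:ℤ)) *
      ∫ θ in (0:ℝ)..Real.pi, Real.cos (k*θ) / Real.sqrt (1 - ω^2 * Real.cos θ ^2) := by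
    intro k hk
    rw [hν, hpk k hk, ← cov ω hω0 hω1 k]
    have he : ∀ t : ℝ,
        (Polynomial.C ((2:ℝ) ^ (1 - (k:ℤ))) * Polynomial.Chebyshev.T ℝ (k:ℤ)).eval t
          / Real.sqrt ((1 - ω ^ 2 * t ^ 2) * (1 - t ^ 2))
        = (2:ℝ) ^ (1 - (k:ℤ)) *
          ((Polynomial.Chebyshev.T ℝ (k:ℤ)).eval t / Real.sqrt ((1 - ω^2*t^2)*(1-t^2))) := by
      intro t
      rw [Polynomial.eval_mul, Polynomial.eval_C, mul_div_assoc]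
    simp only [he]
    exact MeasureTheory.integral_const_mul _ _
  refine ⟨?_, ?_, ?_⟩
  · intro m hm
    rw [key _ (by omega), oddJ ω (2*m-1) ⟨m-1, by omega⟩, mul_zero]
  · rw [hν, hp0]
    have he : ∀ t : ℝ, (1 : Polynomial ℝ).eval t / Real.sqrt ((1 - ω ^ 2 * t ^ 2) * (1 - t ^ 2))
        = (Polynomial.Chebyshev.T ℝ ((0:ℕ):ℤ)).eval t / Real.sqrt ((1 - ω^2*t^2)*(1-t^2)) := by
      intro t
      norm_num [Polynomial.Chebyshev.T_zero]
    simp only [he]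
    rw [cov ω hω0 hω1 0]
    have h0 := evenJ ω 0
    norm_num at h0 ⊢
    rw [h0, hC 0]
    norm_num
  · intro m hm
    rw [key _ (by omega)]
    have h2m : ((2*m : ℕ) : ℝ) = ((2*m : ℕ) : ℝ) := rfl
    rw [show ∫ θ in (0:ℝ)..Real.pi, Real.cos ((2*m : ℕ)*θ) / Real.sqrt (1 - ω^2 * Real.cos θ ^2)
        = (-1:ℝ)^m * ∫ θ in (0:ℝ)..Real.pi, Real.cos (2*(m:ℝ)*θ) / Real.sqrt (1 - ω^2 * Real.sin θ^2)
        from evenJ ω m]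
    rw [hC m, show ((2*m:ℕ):ℤ) = 2*(m:ℤ) by push_cast; ring]
    have hπ : Real.pi ≠ 0 := Real.pi_ne_zero
    field_simp
end
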